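/- arXiv:math/9302204 — 6 statements merged into one kernel-verified Lean document; each statement's English description precedes it below -/
import Mathlib

section
/- Let A be a Lebesgue-measurable subset of [0,1] of positive measure and let g_1,…,g_n ∈ L¹[0,1]. Let C = { f ∈ L¹[0,1] : |f| ≤ 1_A almost everywhere and ∫_A f g_i dμ = 0 for i = 1,…,n }. Then every extreme point u of the convex set C satisfies |u| = 1_A almost everywhere. -/
open MeasureTheory Filter Topology

noncomputable section

/-- Lebesgue measure restricted to `[0,1]`. -/
abbrev μ01 : Measure ℝ := MeasureTheory.volume.restrict (Set.Icc 0 1)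

/-- The space `L¹[0,1]`. -/
abbrev L1 : Type := Lp ℝ 1 μ01

lemma μ01_ne_top (s : Set ℝ) : μ01 s ≠ ⊤ := by
  refine ne_of_lt (lt_of_le_of_lt (measure_mono (Set.subset_univ s)) ?_)
  rw [Measure.restrict_apply_univ, Real.volume_Icc]
  norm_num

open Classical in
/-- The indicator function `1ₛ` as an element of `L¹[0,1]`. -/
def indL1 (s : Set ℝ) : L1 :=
  if h : MeasurableSet s then indicatorConstLp 1 h (μ01_ne_top s) (1:ℝ) else 0

/-- An operator `T : L¹[0,1] → Y` is completely continuous if it maps weakly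
convergent sequences to norm convergent sequences. -/
def CompletelyContinuous {Y : Type*} [NormedAddCommGroup Y] [NormedSpace ℝ Y]
    (T : L1 →L[ℝ] Y) : Prop :=
  ∀ (f : ℕ → L1) (f₀ : L1),
    (∀ φ : L1 →L[ℝ] ℝ, Tendsto (fun t => φ (f t)) atTop (𝓝 (φ f₀))) →
    Tendsto (fun t => T (f t)) atTop (𝓝 (T f₀))

/-! Put `w = 1_A - |u|`. For every `φ` with `|φ| ≤ w` that is orthogonal on `A` to all `gᵢ`, both
`u + φ` and `u - φ` lie in `C`, so extremality forces `φ = 0`. Take `φ = p w` with `p` a nonzero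
polynomial of degree at most `n` bounded by `1` on `[0,1]`: its `n + 1` coefficients are subject
only to the `n` linear conditions `∫_A p w gᵢ = 0`. Since `p` has finitely many roots, `p w = 0`
a.e. gives `w = 0` a.e. -/

open Polynomial

theorem Polynomial.exists_ne_zero_forall_integral_eval_mul_eq_zero {ι : Type*} [Fintype ι]
    {μ : Measure ℝ} (G : ι → ℝ → ℝ)
    (hG : ∀ i (p : ℝ[X]), Integrable (fun x => p.eval x * G i x) μ) :
    ∃ p : ℝ[X], p ≠ 0 ∧ ∀ i, ∫ x, p.eval x * G i x ∂μ = 0 := by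
  let T : ℝ[X] →ₗ[ℝ] ι → ℝ :=
    { toFun p i := ∫ x, p.eval x * G i x ∂μ
      map_add' p q := by
        ext i
        simp only [eval_add, add_mul, Pi.add_apply, integral_add (hG i p) (hG i q)]
      map_smul' c p := by
        ext i
        simp only [eval_smul, smul_eq_mul, mul_assoc, integral_const_mul, Pi.smul_apply,
          RingHom.id_apply] }
  have hdim : Module.finrank ℝ (ι → ℝ) < Module.finrank ℝ ℝ[X]_(Fintype.card ι + 1) := by
    rw [Module.finrank_fintype_fun_eq_card, Module.finrank_eq_card_basis (degreeLT.basis ℝ _),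
      Fintype.card_fin]
    exact Nat.lt_succ_self _
  obtain ⟨⟨p, _⟩, hpker, hp0⟩ := Submodule.exists_mem_ne_zero_of_ne_bot
    (LinearMap.ker_ne_bot_of_finrank_lt (f := T.domRestrict _) hdim)
  exact ⟨p, fun h => hp0 (Subtype.ext h), fun i => congrFun hpker i⟩

theorem Polynomial.ae_eval_ne_zero {μ : Measure ℝ} [NullSingletonClass μ] {p : ℝ[X]}
    (hp : p ≠ 0) :
    ∀ᵐ x ∂μ, p.eval x ≠ 0 :=
  measure_eq_zero_iff_ae_notMem.mp ((finite_setOfPred_isRoot hp).measure_zero μ)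

theorem Polynomial.exists_ne_zero_abs_eval_le_one_forall_integral_eval_mul_eq_zero
    {ι : Type*} [Fintype ι] {μ : Measure ℝ} {K : Set ℝ} (hK : IsCompact K)
    (hμK : ∀ᵐ x ∂μ, x ∈ K) (G : ι → ℝ → ℝ) (hG : ∀ i, Integrable (G i) μ) :
    ∃ p : ℝ[X], p ≠ 0 ∧ (∀ x ∈ K, |p.eval x| ≤ 1) ∧ ∀ i, ∫ x, p.eval x * G i x ∂μ = 0 := by
  obtain ⟨p, hp0, hp⟩ := exists_ne_zero_forall_integral_eval_mul_eq_zero G fun i p => by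
    obtain ⟨M, hM⟩ := hK.exists_bound_of_continuousOn p.continuous.continuousOn
    exact (hG i).bdd_mul p.continuous.aestronglyMeasurable (hμK.mono fun x hx => hM x hx)
  obtain ⟨M, hM⟩ := hK.exists_bound_of_continuousOn p.continuous.continuousOn
  have hM1 : 0 < |M| + 1 := by positivity
  refine ⟨C (|M| + 1)⁻¹ * p, mul_ne_zero (C_ne_zero.2 (inv_ne_zero hM1.ne')) hp0,
    fun x hx => ?_, fun i => ?_⟩
  · rw [eval_mul, eval_C, abs_mul, abs_inv, abs_of_pos hM1, inv_mul_le_one₀ hM1]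
    linarith [Real.norm_eq_abs (p.eval x) ▸ hM x hx, le_abs_self M]
  · simp only [eval_mul, eval_C, mul_assoc, integral_const_mul, hp i, mul_zero]

theorem eq_zero_of_add_mem_of_sub_mem {E : Type*} [AddCommGroup E] [Module ℝ E] {C : Set E}
    {u h : E}
    (hext : ∀ f₁ ∈ C, ∀ f₂ ∈ C, u = (2⁻¹ : ℝ) • f₁ + (2⁻¹ : ℝ) • f₂ → f₁ = f₂)
    (hadd : u + h ∈ C) (hsub : u - h ∈ C) : h = 0 := by
  have hsymm : u + h = u - h := hext _ hadd _ hsub (by module)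
  calc h = (2⁻¹ : ℝ) • ((u + h) - (u - h)) := by module
    _ = 0 := by rw [hsymm, sub_self, smul_zero]

section ConstraintSet

variable {α ι : Type*} [MeasurableSpace α] {μ : Measure α} {A : Set α} {g : ι → α → ℝ}

def constraintSet (μ : Measure α) (A : Set α) (g : ι → α → ℝ) : Set (Lp ℝ 1 μ) :=
  {f | (∀ᵐ x ∂μ, |f x| ≤ A.indicator (fun _ => (1:ℝ)) x) ∧ ∀ i, ∫ x in A, f x * g i x ∂μ = 0}

theorem integrable_mul_of_ae_abs_le_indicator {v : Lp ℝ 1 μ} {w : α → ℝ}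
    (hw : Integrable w (μ.restrict A))
    (hv : ∀ᵐ x ∂μ, |v x| ≤ A.indicator (fun _ => (1:ℝ)) x) :
    Integrable (fun x => v x * w x) (μ.restrict A) :=
  hw.bdd_mul (Lp.aestronglyMeasurable v).restrict <| ae_restrict_of_ae <| hv.mono fun x hx =>
    (Real.norm_eq_abs _).trans_le (hx.trans (Set.indicator_le_self' (fun _ _ => zero_le_one) x))

theorem add_smul_mem_constraintSet {f h : Lp ℝ 1 μ} (hf : f ∈ constraintSet μ A g)
    (hg : ∀ i, Integrable (g i) (μ.restrict A))
    (hfh : ∀ᵐ x ∂μ, |f x| + |h x| ≤ A.indicator (fun _ => (1:ℝ)) x)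
    (hh : ∀ i, ∫ x in A, h x * g i x ∂μ = 0) {s : ℝ} (hs : |s| ≤ 1) :
    f + s • h ∈ constraintSet μ A g := by
  have hcoe : ⇑(f + s • h) =ᵐ[μ] fun x => f x + s * h x := by
    filter_upwards [Lp.coeFn_add f (s • h), Lp.coeFn_smul s h] with x hadd hsmul
    rw [hadd, Pi.add_apply, hsmul, Pi.smul_apply, smul_eq_mul]
  have hh_le : ∀ᵐ x ∂μ, |h x| ≤ A.indicator (fun _ => (1:ℝ)) x :=
    hfh.mono fun x hx => (le_add_of_nonneg_left (abs_nonneg _)).trans hx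
  refine ⟨?_, fun i => ?_⟩
  · filter_upwards [hcoe, hfh] with x hx hx_le
    calc |(f + s • h) x| ≤ |f x| + |s| * |h x| := by rw [hx, ← abs_mul]; exact abs_add_le _ _
      _ ≤ |f x| + |h x| := by gcongr; exact mul_le_of_le_one_left (abs_nonneg _) hs
      _ ≤ _ := hx_le
  · calc ∫ x in A, (f + s • h) x * g i x ∂μ
          = ∫ x in A, (f x * g i x + s * (h x * g i x)) ∂μ :=
            integral_congr_ae <| ae_restrict_of_ae <| hcoe.mono fun x hx => by simp only [hx]; ring
      _ = 0 := by
        rw [integral_add (integrable_mul_of_ae_abs_le_indicator (hg i) hf.1)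
            ((integrable_mul_of_ae_abs_le_indicator (hg i) hh_le).const_mul s),
          integral_const_mul, hf.2 i, hh i, mul_zero, add_zero]

theorem ae_eq_zero_of_abs_add_abs_le_indicator {u : Lp ℝ 1 μ} (hu : u ∈ constraintSet μ A g)
    (hext : ∀ f₁ ∈ constraintSet μ A g, ∀ f₂ ∈ constraintSet μ A g,
      u = (2⁻¹ : ℝ) • f₁ + (2⁻¹ : ℝ) • f₂ → f₁ = f₂)
    (hg : ∀ i, Integrable (g i) (μ.restrict A)) {φ : α → ℝ} (hφ : Integrable φ μ)
    (huφ : ∀ᵐ x ∂μ, |u x| + |φ x| ≤ A.indicator (fun _ => (1:ℝ)) x)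
    (hφg : ∀ i, ∫ x in A, φ x * g i x ∂μ = 0) :
    φ =ᵐ[μ] 0 := by
  have hcoe : ⇑(hφ.toL1 φ) =ᵐ[μ] φ := hφ.coeFn_toL1
  have hmem : ∀ s : ℝ, |s| ≤ 1 → u + s • hφ.toL1 φ ∈ constraintSet μ A g := fun s hs =>
    add_smul_mem_constraintSet hu hg
      (by filter_upwards [hcoe, huφ] with x hx hx_le; rwa [hx])
      (fun i => (integral_congr_ae (ae_restrict_of_ae (hcoe.mono fun x hx => by
        simp only [hx]))).trans (hφg i)) hs
  have h0 : hφ.toL1 φ = 0 := eq_zero_of_add_mem_of_sub_mem hext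
    (by simpa using hmem 1 (by simp)) (by simpa [sub_eq_add_neg] using hmem (-1) (by simp))
  exact hcoe.symm.trans (h0 ▸ Lp.coeFn_zero ℝ 1 μ)

end ConstraintSet

theorem stmt1_general (A : Set ℝ) (hA : MeasurableSet A) (n : ℕ) (g : Fin n → ℝ → ℝ)
    (hg : ∀ i, Integrable (g i) μ01)
    (C : Set L1)
    (hC : C = {f : L1 | (∀ᵐ x ∂μ01, |f x| ≤ A.indicator (fun _ => (1:ℝ)) x) ∧
                ∀ i, ∫ x in A, f x * g i x ∂μ01 = 0})
    (u : L1) (huC : u ∈ C)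
    (hext : ∀ f₁ ∈ C, ∀ f₂ ∈ C, u = (2⁻¹ : ℝ) • f₁ + (2⁻¹ : ℝ) • f₂ → f₁ = f₂) :
    ∀ᵐ x ∂μ01, |u x| = A.indicator (fun _ => (1:ℝ)) x := by
  change C = constraintSet μ01 A g at hC
  subst hC
  set w : ℝ → ℝ := fun x => A.indicator (fun _ => (1:ℝ)) x - |u x|
  have hw_bound : ∀ᵐ x ∂μ01, 0 ≤ w x ∧ w x ≤ 1 := huC.1.mono fun x hx =>
    ⟨sub_nonneg.2 hx, by linarith [abs_nonneg (u x),
      Set.indicator_le_self' (s := A) (f := fun _ => (1:ℝ)) (fun _ _ => zero_le_one) x]⟩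
  have hw_int : Integrable w μ01 :=
    ((integrable_const 1).indicator hA).sub (L1.integrable_coeFn u).abs
  have hwg : ∀ i, Integrable (fun x => w x * g i x) μ01 := fun i =>
    (hg i).bdd_mul (c := 1) hw_int.aestronglyMeasurable
      (hw_bound.mono fun x hx => by rw [Real.norm_eq_abs, abs_le]; constructor <;> linarith)
  obtain ⟨p, hp0, hp1, hp⟩ := exists_ne_zero_abs_eval_le_one_forall_integral_eval_mul_eq_zero
    (μ := μ01.restrict A) isCompact_Icc (ae_restrict_of_ae (ae_restrict_mem measurableSet_Icc))
    _ fun i => (hwg i).restrict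
  have hφ_int : Integrable (fun x => p.eval x * w x) μ01 :=
    IntegrableOn.continuousOn_mul p.continuous.continuousOn hw_int isCompact_Icc
  have huφ : ∀ᵐ x ∂μ01, |u x| + |p.eval x * w x| ≤ A.indicator (fun _ => (1:ℝ)) x := by
    filter_upwards [ae_restrict_mem measurableSet_Icc, hw_bound] with x hx hwx
    rw [abs_mul, abs_of_nonneg hwx.1]
    linarith [mul_le_of_le_one_left hwx.1 (hp1 x hx)]
  have hφ0 := ae_eq_zero_of_abs_add_abs_le_indicator huC hext (fun i => (hg i).restrict) hφ_int
    huφ fun i => by simpa only [mul_assoc] using hp i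
  filter_upwards [hφ0, p.ae_eval_ne_zero hp0] with x hx hpx
  have : w x = 0 := by simpa [hpx] using hx
  linarith

/-- Lemma 2: if `A ⊆ [0,1]` has positive measure, `g 1, …, g n ∈ L¹`, and
`C = {f ∈ L¹ : |f| ≤ 1_A a.e. and ∫_A f gᵢ dμ = 0 for all i}`, then every extreme
point `u` of `C` (i.e. `u` is not the midpoint of two distinct points of `C`)
satisfies `|u| = 1_A` almost everywhere. -/
theorem stmt1 (A : Set ℝ) (hA : MeasurableSet A) (hA1 : A ⊆ Set.Icc 0 1)
    (hApos : 0 < μ01 A) (n : ℕ) (g : Fin n → ℝ → ℝ)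
    (hg : ∀ i, Integrable (g i) μ01)
    (C : Set L1)
    (hC : C = {f : L1 | (∀ᵐ x ∂μ01, |f x| ≤ A.indicator (fun _ => (1:ℝ)) x) ∧
                ∀ i, ∫ x in A, f x * g i x ∂μ01 = 0})
    (u : L1) (huC : u ∈ C)
    (hext : ∀ f₁ ∈ C, ∀ f₂ ∈ C, u = (2⁻¹ : ℝ) • f₁ + (2⁻¹ : ℝ) • f₂ → f₁ = f₂) :
    ∀ᵐ x ∂μ01, |u x| = A.indicator (fun _ => (1:ℝ)) x :=
  stmt1_general A hA n g hg C hC u huC hext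
end
end

section
/- Let X be a real Banach space, let {X_j}_{j≥1} be a sequence of nonzero finite-dimensional subspaces of X, and let (τ_n)_{n≥1} be real numbers larger than 1 with Π_n τ_n ≤ τ < ∞. Suppose that for each n there is a set N_n of norm-one functionals in X*, each vanishing on X_{n+1}, which norms the linear span of X_1 ∪ ⋯ ∪ X_n within τ_n. Then {X_j} forms a finite dimensional decomposition of the closed linear span of ∪_j X_j with constant at most τ. -/
open MeasureTheory Filter Topology

noncomputable section

/-- A set `N` of functionals norms the set `V` within `τ` if for each `x ∈ V` there is
`φ ∈ N` with `‖x‖ ≤ τ * φ x`. -/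
def NormsWithin {Y : Type*} [NormedAddCommGroup Y] [NormedSpace ℝ Y]
    (N : Set (Y →L[ℝ] ℝ)) (V : Set Y) (τ : ℝ) : Prop :=
  ∀ x ∈ V, ∃ φ ∈ N, ‖x‖ ≤ τ * φ x

/-- `{G n}` is a finite dimensional decomposition of the closed subspace `X₀` with
constant at most `C`: each `G n` is a finite-dimensional subspace of `X₀`, every
`x ∈ X₀` has a unique representation `x = Σ_n g n` with `g n ∈ G n` (norm convergence
of the partial sums), and the canonical projections have norm at most `C`. -/
def IsFDDOf {X : Type*} [NormedAddCommGroup X] [NormedSpace ℝ X]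
    (G : ℕ → Submodule ℝ X) (X₀ : Submodule ℝ X) (C : ℝ) : Prop :=
  (∀ n, FiniteDimensional ℝ (G n)) ∧
  (∀ n, G n ≤ X₀) ∧
  (∀ x ∈ X₀, ∃! g : ℕ → X, (∀ n, g n ∈ G n) ∧
      Tendsto (fun N => ∑ n ∈ Finset.range N, g n) atTop (𝓝 x)) ∧
  (∀ x ∈ X₀, ∀ g : ℕ → X, (∀ n, g n ∈ G n) →
      Tendsto (fun N => ∑ n ∈ Finset.range N, g n) atTop (𝓝 x) →
      ∀ N, ‖∑ n ∈ Finset.range N, g n‖ ≤ C * ‖x‖)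

/-- If `{Xj j}` are nonzero finite-dimensional subspaces, `τn n > 1` with all partial
products `Π τn ≤ τ`, and for each `n` there is a set of norm-one functionals vanishing
on `Xj (n+1)` and norming the span of `Xj 0, …, Xj n` within `τn n`, then `{Xj j}`
forms a finite dimensional decomposition of the closed linear span of `⋃ j, Xj j`
with constant at most `τ`. -/
theorem stmt4 {X : Type*} [NormedAddCommGroup X] [NormedSpace ℝ X] [CompleteSpace X]
    (Xj : ℕ → Submodule ℝ X)
    (hfin : ∀ j, FiniteDimensional ℝ (Xj j))
    (hnz : ∀ j, Xj j ≠ ⊥)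
    (τn : ℕ → ℝ) (hτn : ∀ n, 1 < τn n)
    (τ : ℝ) (hτ : ∀ N : ℕ, ∏ n ∈ Finset.range N, τn n ≤ τ)
    (N : ℕ → Set (X →L[ℝ] ℝ))
    (hN1 : ∀ n, ∀ φ ∈ N n, ‖φ‖ = 1)
    (hNvan : ∀ n, ∀ φ ∈ N n, ∀ v ∈ Xj (n + 1), φ v = 0)
    (hNnorm : ∀ n, NormsWithin (N n)
      ((⨆ j ∈ Finset.range (n + 1), Xj j : Submodule ℝ X) : Set X) (τn n)) :
    IsFDDOf Xj (⨆ j, Xj j).topologicalClosure τ := by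
  have hτ1 : (1:ℝ) ≤ τ := by simpa using hτ 0
  have hτpos : (0:ℝ) < τ := lt_of_lt_of_le one_pos hτ1
  have hτnpos : ∀ n, (0:ℝ) < τn n := fun n => lt_trans one_pos (hτn n)
  have oneleprod : ∀ K, (1:ℝ) ≤ ∏ n ∈ Finset.range K, τn n := by
    intro K
    induction K with
    | zero => simp
    | succ K ih => rw [Finset.prod_range_succ]; nlinarith [hτn K]
  -- partial sums lie in the corresponding finite sup
  have hmem_sum : ∀ (g : ℕ → X), (∀ n, g n ∈ Xj n) → ∀ K,
      (∑ n ∈ Finset.range K, g n) ∈ (⨆ j ∈ Finset.range K, Xj j : Submodule ℝ X) := by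
    intro g hg K
    refine Submodule.sum_mem _ fun n hn => ?_
    exact Submodule.mem_iSup_of_mem n (Submodule.mem_iSup_of_mem hn (hg n))
  -- Lemma A
  have lemA : ∀ m (x : X), x ∈ (⨆ j ∈ Finset.range (m+1), Xj j : Submodule ℝ X) →
      ∀ y ∈ Xj (m+1), ‖x‖ ≤ τn m * ‖x + y‖ := by
    intro m x hx y hy
    obtain ⟨φ, hφ, hxφ⟩ := hNnorm m x hx
    have hφy : φ y = 0 := hNvan m φ hφ y hy
    have h1 : φ x = φ (x + y) := by rw [map_add, hφy, add_zero]
    have h2 : φ (x + y) ≤ ‖x + y‖ := by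
      calc φ (x + y) ≤ ‖φ (x + y)‖ := le_abs_self _
        _ ≤ ‖φ‖ * ‖x + y‖ := φ.le_opNorm _
        _ = ‖x + y‖ := by rw [hN1 m φ hφ, one_mul]
    calc ‖x‖ ≤ τn m * φ x := hxφ
      _ ≤ τn m * ‖x + y‖ := by
          rw [h1]; exact mul_le_mul_of_nonneg_left h2 (hτnpos m).le
  -- Lemma B0
  have lemB0 : ∀ (g : ℕ → X), (∀ n, g n ∈ Xj n) → ∀ K M : ℕ, K ≤ M →
      ‖∑ n ∈ Finset.range (K+1), g n‖ ≤
        (∏ n ∈ Finset.Ico K M, τn n) * ‖∑ n ∈ Finset.range (M+1), g n‖ := by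
    intro g hg K M hKM
    induction M, hKM using Nat.le_induction with
    | base => simp
    | succ M hKM ih =>
      have hstep : ‖∑ n ∈ Finset.range (M+1), g n‖ ≤ τn M * ‖∑ n ∈ Finset.range (M+2), g n‖ := by
        have := lemA M (∑ n ∈ Finset.range (M+1), g n) (hmem_sum g hg (M+1)) (g (M+1)) (hg (M+1))
        rwa [← Finset.sum_range_succ] at this
      have hprodnn : (0:ℝ) ≤ ∏ n ∈ Finset.Ico K M, τn n :=
        Finset.prod_nonneg fun n _ => (hτnpos n).le
      calc ‖∑ n ∈ Finset.range (K+1), g n‖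
          ≤ (∏ n ∈ Finset.Ico K M, τn n) * ‖∑ n ∈ Finset.range (M+1), g n‖ := ih
        _ ≤ (∏ n ∈ Finset.Ico K M, τn n) * (τn M * ‖∑ n ∈ Finset.range (M+2), g n‖) :=
            mul_le_mul_of_nonneg_left hstep hprodnn
        _ = (∏ n ∈ Finset.Ico K (M+1), τn n) * ‖∑ n ∈ Finset.range (M+1+1), g n‖ := by
            rw [Finset.prod_Ico_succ_top hKM]; ring
  -- Lemma B
  have lemB : ∀ (g : ℕ → X), (∀ n, g n ∈ Xj n) → ∀ K M : ℕ, K ≤ M →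
      ‖∑ n ∈ Finset.range K, g n‖ ≤ τ * ‖∑ n ∈ Finset.range M, g n‖ := by
    intro g hg K M hKM
    match K, M, hKM with
    | 0, M, _ => simpa using mul_nonneg hτpos.le (norm_nonneg _)
    | K+1, M+1, hKM =>
      have hKM' : K ≤ M := Nat.succ_le_succ_iff.mp hKM
      have h1 := lemB0 g hg K M hKM'
      have h2 : (∏ n ∈ Finset.Ico K M, τn n) ≤ τ := by
        have e := Finset.prod_range_mul_prod_Ico τn hKM'
        have h3 := oneleprod K
        have h4 := hτ M
        have h5 : (0:ℝ) ≤ ∏ n ∈ Finset.Ico K M, τn n :=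
          Finset.prod_nonneg fun n _ => (hτnpos n).le
        nlinarith
      exact le_trans h1 (mul_le_mul_of_nonneg_right h2 (norm_nonneg _))
  -- representation of elements of the span
  have hrep : ∀ v : X, v ∈ (⨆ j, Xj j : Submodule ℝ X) → ∃ (h : ℕ → X) (M : ℕ),
      (∀ n, h n ∈ Xj n) ∧ ∀ K, M ≤ K → ∑ n ∈ Finset.range K, h n = v := by
    intro v hv
    obtain ⟨f, hf, hsum⟩ := (Submodule.mem_iSup_iff_exists_finsupp Xj v).mp hv
    classical
    refine ⟨fun n => f n, (f.support.sup id) + 1, hf, fun K hK => ?_⟩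
    rw [← hsum, Finsupp.sum]
    refine (Finset.sum_subset ?_ ?_).symm
    · intro n hn
      refine Finset.mem_range.mpr (lt_of_lt_of_le ?_ hK)
      exact Nat.lt_succ_of_le (Finset.le_sup (f := id) hn)
    · intro n _ hn
      exact Finsupp.notMem_support_iff.mp hn
  refine ⟨hfin, fun n => le_trans (le_iSup Xj n) (Submodule.le_topologicalClosure _), ?_, ?_⟩
  · -- existence and uniqueness
    intro x hx
    have hx' : x ∈ closure ((⨆ j, Xj j : Submodule ℝ X) : Set X) := hx
    obtain ⟨u, hu, hulim⟩ := mem_closure_iff_seq_limit.mp hx'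
    choose h M hh hMsum using fun k => hrep (u k) (hu k)
    set q : ℕ → ℕ → X := fun K k => ∑ n ∈ Finset.range K, h k n with hqdef
    have keyC : ∀ (K k l : ℕ), ‖q K k - q K l‖ ≤ τ * ‖u k - u l‖ := by
      intro K k l
      have hle : K ≤ max K (max (M k) (M l)) := le_max_left _ _
      have h1 := lemB (fun n => h k n - h l n)
        (fun n => Submodule.sub_mem _ (hh k n) (hh l n)) K (max K (max (M k) (M l))) hle
      rw [Finset.sum_sub_distrib, Finset.sum_sub_distrib,
        hMsum k _ (le_trans (le_max_left _ _) (le_max_right _ _)),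
        hMsum l _ (le_trans (le_max_right _ _) (le_max_right _ _))] at h1
      exact h1
    have hcau : ∀ K, CauchySeq (fun k => q K k) := by
      intro K
      rw [Metric.cauchySeq_iff]
      intro ε hε
      obtain ⟨K0, hK0⟩ := Metric.cauchySeq_iff.mp hulim.cauchySeq (ε/τ) (div_pos hε hτpos)
      refine ⟨K0, fun m hm l hl => ?_⟩
      rw [dist_eq_norm]
      calc ‖q K m - q K l‖ ≤ τ * ‖u m - u l‖ := keyC K m l
        _ < τ * (ε/τ) := by
            refine mul_lt_mul_of_pos_left ?_ hτpos
            rw [← dist_eq_norm]; exact hK0 m hm l hl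
        _ = ε := mul_div_cancel₀ ε (ne_of_gt hτpos)
    choose y hy using fun K => cauchySeq_tendsto_of_complete (hcau K)
    have hy0 : y 0 = 0 := by
      refine tendsto_nhds_unique (hy 0) ?_
      have : (fun k => q 0 k) = fun _ => (0:X) := by funext k; simp [q]
      rw [this]; exact tendsto_const_nhds
    set g : ℕ → X := fun n => y (n+1) - y n with hgdef
    have hgmem : ∀ n, g n ∈ Xj n := by
      intro n
      have hcl : IsClosed ((Xj n : Set X)) := (Xj n).closed_of_finiteDimensional
      have ht : Tendsto (fun k => h k n) atTop (𝓝 (g n)) := by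
        have he : (fun k => h k n) = fun k => q (n+1) k - q n k := by
          funext k; simp [q, Finset.sum_range_succ]
        rw [he]; exact (hy (n+1)).sub (hy n)
      exact hcl.mem_of_tendsto ht (Filter.Eventually.of_forall fun k => hh k n)
    have hpart : ∀ K, ∑ n ∈ Finset.range K, g n = y K := by
      intro K
      rw [hgdef, Finset.sum_range_sub (fun n => y n), hy0, sub_zero]
    have hbd : ∀ K k, ‖y K - q K k‖ ≤ τ * ‖x - u k‖ := by
      intro K k
      have t1 : Tendsto (fun l => ‖q K l - q K k‖) atTop (𝓝 ‖y K - q K k‖) :=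
        ((hy K).sub tendsto_const_nhds).norm
      have t2 : Tendsto (fun l => τ * ‖u l - u k‖) atTop (𝓝 (τ * ‖x - u k‖)) :=
        ((hulim.sub tendsto_const_nhds).norm).const_mul τ
      exact le_of_tendsto_of_tendsto' t1 t2 (fun l => keyC K l k)
    have hconv : Tendsto (fun K => ∑ n ∈ Finset.range K, g n) atTop (𝓝 x) := by
      rw [show (fun K => ∑ n ∈ Finset.range K, g n) = y from funext hpart]
      rw [Metric.tendsto_atTop]
      intro ε hε
      have hτ1' : (0:ℝ) < τ + 1 := by linarith
      obtain ⟨k0, hk0⟩ := Metric.tendsto_atTop.mp hulim (ε/(τ+1)) (div_pos hε hτ1')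
      refine ⟨M k0, fun K hK => ?_⟩
      have hqk : q K k0 = u k0 := hMsum k0 K hK
      have hb := hbd K k0
      rw [hqk] at hb
      have hd : dist (u k0) x < ε/(τ+1) := hk0 k0 le_rfl
      rw [dist_eq_norm] at hd ⊢
      have hrev : ‖x - u k0‖ = ‖u k0 - x‖ := norm_sub_rev _ _
      calc ‖y K - x‖ = ‖(y K - u k0) + (u k0 - x)‖ := by rw [sub_add_sub_cancel]
        _ ≤ ‖y K - u k0‖ + ‖u k0 - x‖ := norm_add_le _ _
        _ ≤ τ * ‖u k0 - x‖ + ‖u k0 - x‖ := by rw [hrev] at hb; linarith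
        _ = (τ + 1) * ‖u k0 - x‖ := by ring
        _ < (τ + 1) * (ε/(τ+1)) := mul_lt_mul_of_pos_left hd hτ1'
        _ = ε := mul_div_cancel₀ ε (ne_of_gt hτ1')
    refine ⟨g, ⟨hgmem, hconv⟩, ?_⟩
    rintro g' ⟨hg'mem, hg'conv⟩
    have hd : ∀ n, g' n - g n ∈ Xj n := fun n => Submodule.sub_mem _ (hg'mem n) (hgmem n)
    have hdconv : Tendsto (fun K => ∑ n ∈ Finset.range K, (g' n - g n)) atTop (𝓝 0) := by
      have := hg'conv.sub hconv
      simp only [← Finset.sum_sub_distrib] at this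
      simpa using this
    have hzero : ∀ K, ∑ n ∈ Finset.range K, (g' n - g n) = 0 := by
      intro K
      have hle : ∀ M', K ≤ M' → ‖∑ n ∈ Finset.range K, (g' n - g n)‖ ≤
          τ * ‖∑ n ∈ Finset.range M', (g' n - g n)‖ := fun M' => lemB _ hd K M'
      have hl : Tendsto (fun M' => τ * ‖∑ n ∈ Finset.range M', (g' n - g n)‖) atTop
          (𝓝 (τ * ‖(0:X)‖)) := hdconv.norm.const_mul τ
      have hle0 := ge_of_tendsto hl (Filter.eventually_atTop.mpr ⟨K, hle⟩)
      simp only [norm_zero, mul_zero] at hle0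
      exact norm_le_zero_iff.mp hle0
    funext n
    have h1 := hzero (n+1)
    rw [Finset.sum_range_succ, hzero n, zero_add] at h1
    exact sub_eq_zero.mp h1
  · -- projection bound
    intro x hx g hg hconv K
    have hl : Tendsto (fun M => τ * ‖∑ n ∈ Finset.range M, g n‖) atTop (𝓝 (τ * ‖x‖)) :=
      hconv.norm.const_mul τ
    exact ge_of_tendsto hl (Filter.eventually_atTop.mpr ⟨K, fun M => lemB g hg K M⟩)
end
end

section
/- Let X be a real Banach space and δ > 0. If a bounded δ-Rademacher tree grows in X, then X fails the complete continuity property. Equivalently, if T : L¹[0,1] → X is a bounded linear operator such that ‖Σ_{k=1}^{2^n} T h̃_{2^n+k}‖ ≥ 2^n δ for all n ≥ 0, where {h̃_j} is the standard Haar system, then T is not completely continuous. -/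
open MeasureTheory Filter Topology

noncomputable section

/-- The dyadic interval `I n k = [(k-1)/2^n, k/2^n)`. -/
def dyadicI (n k : ℕ) : Set ℝ := Set.Ico (((k : ℝ) - 1) / 2 ^ n) ((k : ℝ) / 2 ^ n)

/-- The standard (L¹-normalized) Haar system on `[0,1]`: `h̃ 1 = 1_{[0,1]}` and
`h̃ (2^n + k) = 2^n (1_{I^{n+1}_{2k-1}} - 1_{I^{n+1}_{2k}})` for `n ≥ 0`, `1 ≤ k ≤ 2^n`
(for `j ≥ 2` we have `j = 2^n + k` with `n = Nat.log2 (j-1)`). -/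
def stdHaar : ℕ → L1 := fun j =>
  if j = 1 then indL1 (Set.Icc 0 1)
  else
    let n := Nat.log2 (j - 1)
    let k := j - 2 ^ n
    (2 ^ n : ℝ) • (indL1 (dyadicI (n+1) (2*k-1)) - indL1 (dyadicI (n+1) (2*k)))



/-!
Summing the `n`-th row of the Haar system gives `2^n r_n`, where `r_n` is the `n`-th Rademacher
function, so the hypothesis says `‖T r_n‖ ≥ δ` for all `n`. The `r_n` are orthonormal in
`L²[0,1]`, hence tend weakly to `0` there by Bessel's inequality, and therefore also in `L¹[0,1]`:
a functional on `L¹` composed with the inclusion `L² ⊆ L¹` is a functional on `L²`. A completely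
continuous `T` would thus send `(r_n)` to a null sequence.
-/

open scoped ENNReal

namespace MeasureTheory.Lp

variable {α E : Type*} {m : MeasurableSpace α} {μ : Measure α} [IsProbabilityMeasure μ]
  [NormedAddCommGroup E] [NormedSpace ℝ E] {p q : ℝ≥0∞} [Fact (1 ≤ p)] [Fact (1 ≤ q)]

def inclusionOfLE (hpq : p ≤ q) : Lp E q μ →L[ℝ] Lp E p μ :=
  LinearMap.mkContinuous
    { toFun f := ((Lp.memLp f).mono_exponent hpq).toLp
      map_add' f g := by
        rw [← MemLp.toLp_add]
        exact MemLp.toLp_congr _ _ (Lp.coeFn_add f g)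
      map_smul' c f := by
        rw [RingHom.id_apply, ← MemLp.toLp_const_smul]
        exact MemLp.toLp_congr _ _ (Lp.coeFn_smul c f) }
    1
    (fun f => by
      rw [one_mul, LinearMap.coe_mk, AddHom.coe_mk,
        Lp.norm_toLp _ ((Lp.memLp f).mono_exponent hpq), Lp.norm_def]
      exact ENNReal.toReal_mono (Lp.eLpNorm_ne_top f)
        (eLpNorm_le_eLpNorm_of_exponent_le hpq (Lp.aestronglyMeasurable f)))

lemma coeFn_inclusionOfLE (hpq : p ≤ q) (f : Lp E q μ) :
    ⇑(inclusionOfLE hpq f) =ᵐ[μ] f :=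
  MemLp.coeFn_toLp ((Lp.memLp f).mono_exponent hpq)

end MeasureTheory.Lp

section Orthonormal

variable {𝕜 E : Type*} [RCLike 𝕜] [NormedAddCommGroup E] [InnerProductSpace 𝕜 E]
  {v : ℕ → E}

theorem Orthonormal.tendsto_inner_zero (hv : Orthonormal 𝕜 v) (x : E) :
    Tendsto (fun n => inner 𝕜 x (v n)) atTop (𝓝 0) := by
  have hsq := (hv.inner_products_summable x).tendsto_atTop_zero.sqrt
  simp only [Real.sqrt_sq (norm_nonneg _), Real.sqrt_zero] at hsq
  rw [tendsto_zero_iff_norm_tendsto_zero]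
  simpa only [norm_inner_symm] using hsq

theorem Orthonormal.tendsto_dual_apply_zero [CompleteSpace E] (hv : Orthonormal 𝕜 v)
    (φ : StrongDual 𝕜 E) : Tendsto (fun n => φ (v n)) atTop (𝓝 0) := by
  simpa only [InnerProductSpace.toDual_symm_apply] using
    hv.tendsto_inner_zero ((InnerProductSpace.toDual 𝕜 E).symm φ)

end Orthonormal

lemma Finset.sum_range_two_mul {M : Type*} [AddCommMonoid M] (n : ℕ) (f : ℕ → M) :
    ∑ m ∈ Finset.range (2 * n), f m = ∑ j ∈ Finset.range n, (f (2 * j) + f (2 * j + 1)) := by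
  induction n with
  | zero => simp
  | succ n ih =>
    rw [Nat.mul_succ, Finset.sum_range_succ, Finset.sum_range_succ, Finset.sum_range_succ, ih,
      add_assoc]

instance : IsProbabilityMeasure μ01 :=
  ⟨by rw [Measure.restrict_apply_univ, Real.volume_Icc]; norm_num⟩

section DyadicStep

/-- Unlike `dyadicI`, indexed from `0`. -/
def dyadicIco (N m : ℕ) : Set ℝ := Set.Ico (m / 2 ^ N) ((m + 1) / 2 ^ N)

variable {N m : ℕ} {x : ℝ}

lemma measurableSet_dyadicIco (N m : ℕ) : MeasurableSet (dyadicIco N m) := measurableSet_Ico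

lemma dyadicI_add_one (N m : ℕ) : dyadicI N (m + 1) = dyadicIco N m := by
  simp only [dyadicI, dyadicIco, Nat.cast_add, Nat.cast_one, add_sub_cancel_right]

lemma dyadicIco_subset_Ico (hm : m < 2 ^ N) : dyadicIco N m ⊆ Set.Ico 0 1 := by
  have hm' : (m : ℝ) + 1 ≤ 2 ^ N := by exact_mod_cast hm
  rintro x ⟨h1, h2⟩
  exact ⟨le_trans (by positivity) h1,
    h2.trans_le ((div_le_one (by positivity)).2 hm')⟩

lemma mem_dyadicIco_iff (hx : 0 ≤ x) : x ∈ dyadicIco N m ↔ ⌊(2 : ℝ) ^ N * x⌋₊ = m := by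
  rw [Nat.floor_eq_iff (by positivity), dyadicIco, Set.mem_Ico,
    div_le_iff₀ (by positivity), lt_div_iff₀ (by positivity), mul_comm x]

lemma μ01_real_dyadicIco (hm : m < 2 ^ N) : μ01.real (dyadicIco N m) = 1 / 2 ^ N := by
  rw [measureReal_def, Measure.restrict_apply (measurableSet_dyadicIco N m),
    Set.inter_eq_left.2 ((dyadicIco_subset_Ico hm).trans Set.Ico_subset_Icc_self),
    dyadicIco, Real.volume_Ico, add_div, add_sub_cancel_left,
    ENNReal.toReal_ofReal (by positivity)]

def dyadicStep (N : ℕ) (c : ℕ → ℝ) (x : ℝ) : ℝ :=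
  ∑ m ∈ Finset.range (2 ^ N), c m * (dyadicIco N m).indicator (fun _ => 1) x

variable {c : ℕ → ℝ}

lemma dyadicStep_of_mem (hx : x ∈ Set.Ico (0 : ℝ) 1) :
    dyadicStep N c x = c ⌊(2 : ℝ) ^ N * x⌋₊ := by
  have hlt : ⌊(2 : ℝ) ^ N * x⌋₊ < 2 ^ N := by
    rw [Nat.floor_lt (by have := hx.1; positivity)]
    push_cast
    nlinarith [hx.2, pow_pos (zero_lt_two (α := ℝ)) N]
  rw [dyadicStep, Finset.sum_eq_single_of_mem _ (Finset.mem_range.2 hlt),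
    Set.indicator_of_mem ((mem_dyadicIco_iff hx.1).2 rfl), mul_one]
  intro b _ hne
  rw [Set.indicator_of_notMem (fun hb => hne ((mem_dyadicIco_iff hx.1).1 hb).symm), mul_zero]

lemma dyadicStep_of_notMem (hx : x ∉ Set.Ico (0 : ℝ) 1) : dyadicStep N c x = 0 :=
  Finset.sum_eq_zero fun m hm => by
    rw [Set.indicator_of_notMem
      (fun hxm => hx (dyadicIco_subset_Ico (Finset.mem_range.1 hm) hxm)), mul_zero]

lemma memLp_dyadicStep (N : ℕ) (c : ℕ → ℝ) (p : ℝ≥0∞) : MemLp (dyadicStep N c) p μ01 :=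
  memLp_finsetSum _ fun m _ =>
    (memLp_indicator_const p (measurableSet_dyadicIco N m) 1
      (Or.inr (μ01_ne_top _))).const_mul (c m)

lemma integral_dyadicStep (N : ℕ) (c : ℕ → ℝ) :
    ∫ x, dyadicStep N c x ∂μ01 = (∑ m ∈ Finset.range (2 ^ N), c m) / 2 ^ N := by
  unfold dyadicStep
  rw [integral_finsetSum _ fun m _ =>
    ((integrable_const 1).indicator (measurableSet_dyadicIco N m)).const_mul (c m),
    Finset.sum_div]
  refine Finset.sum_congr rfl fun m hm => ?_
  rw [integral_const_mul, integral_indicator_const 1 (measurableSet_dyadicIco N m),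
    μ01_real_dyadicIco (Finset.mem_range.1 hm), smul_eq_mul, mul_one, mul_one_div]

end DyadicStep

section Rademacher

def rademacher (t : ℕ) : ℝ → ℝ := dyadicStep (t + 1) fun m => (-1) ^ m

lemma memLp_rademacher (t : ℕ) (p : ℝ≥0∞) : MemLp (rademacher t) p μ01 :=
  memLp_dyadicStep _ _ p

variable {s t : ℕ}

lemma floor_two_pow_mul_eq_div (hst : s ≤ t) (x : ℝ) :
    ⌊(2 : ℝ) ^ s * x⌋₊ = ⌊(2 : ℝ) ^ t * x⌋₊ / 2 ^ (t - s) := by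
  rw [← Nat.floor_div_natCast, Nat.cast_pow, Nat.cast_ofNat, mul_div_right_comm,
    div_eq_mul_inv, ← pow_sub₀ _ two_ne_zero (Nat.sub_le t s), Nat.sub_sub_self hst]

lemma rademacher_mul_rademacher (hst : s ≤ t) :
    (fun x => rademacher s x * rademacher t x) =
      dyadicStep (t + 1) fun m => (-1) ^ (m / 2 ^ (t - s)) * (-1) ^ m := by
  funext x
  by_cases hx : x ∈ Set.Ico (0 : ℝ) 1
  · rw [rademacher, rademacher, dyadicStep_of_mem hx, dyadicStep_of_mem hx, dyadicStep_of_mem hx,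
      floor_two_pow_mul_eq_div (Nat.add_le_add_right hst 1), Nat.add_sub_add_right]
  · rw [rademacher, dyadicStep_of_notMem hx, dyadicStep_of_notMem hx, zero_mul]

lemma integral_rademacher_mul_self (t : ℕ) : ∫ x, rademacher t x * rademacher t x ∂μ01 = 1 := by
  rw [rademacher_mul_rademacher le_rfl, integral_dyadicStep]
  simp [← pow_add, ← two_mul, pow_mul]

/-- For `s < t` the sign `(-1)^(m / 2^(t-s))` is the same on the pair `2j, 2j+1`, while
`(-1)^m` flips. -/
lemma integral_rademacher_mul_of_lt (hst : s < t) :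
    ∫ x, rademacher s x * rademacher t x ∂μ01 = 0 := by
  have hpair (j : ℕ) : (2 * j) / 2 ^ (t - s) = (2 * j + 1) / 2 ^ (t - s) := by
    obtain ⟨d, hd⟩ := Nat.exists_eq_add_of_lt hst
    rw [show t - s = d + 1 by omega, pow_succ', ← Nat.div_div_eq_div_mul,
      ← Nat.div_div_eq_div_mul, Nat.mul_div_cancel_left _ two_pos,
      Nat.mul_add_div two_pos, Nat.div_eq_of_lt one_lt_two, add_zero]
  rw [rademacher_mul_rademacher hst.le, integral_dyadicStep, pow_succ', Finset.sum_range_two_mul]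
  simp [hpair, pow_succ, pow_mul]

end Rademacher

section RademacherLp

def rademacherLp (p : ℝ≥0∞) (t : ℕ) : Lp ℝ p μ01 := (memLp_rademacher t p).toLp

lemma coeFn_rademacherLp (p : ℝ≥0∞) (t : ℕ) : ⇑(rademacherLp p t) =ᵐ[μ01] rademacher t :=
  MemLp.coeFn_toLp _

lemma orthonormal_rademacherLp_two : Orthonormal ℝ (rademacherLp 2) := by
  rw [orthonormal_iff_ite]
  intro s t
  have hprod : (fun x => inner ℝ (rademacherLp 2 s x) (rademacherLp 2 t x))
      =ᵐ[μ01] fun x => rademacher s x * rademacher t x := by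
    filter_upwards [coeFn_rademacherLp 2 s, coeFn_rademacherLp 2 t] with x hs ht
    rw [hs, ht, real_inner_eq_re_inner, RCLike.inner_apply, conj_trivial, RCLike.re_to_real,
      mul_comm]
  rw [L2.inner_def, integral_congr_ae hprod]
  rcases lt_trichotomy s t with h | rfl | h
  · rw [if_neg h.ne, integral_rademacher_mul_of_lt h]
  · rw [if_pos rfl, integral_rademacher_mul_self]
  · simp only [mul_comm (rademacher s _), if_neg h.ne', integral_rademacher_mul_of_lt h]

lemma inclusionOfLE_rademacherLp (t : ℕ) :
    Lp.inclusionOfLE one_le_two (rademacherLp 2 t) = rademacherLp 1 t :=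
  Lp.ext <| (Lp.coeFn_inclusionOfLE _ _).trans <|
    (coeFn_rademacherLp 2 t).trans (coeFn_rademacherLp 1 t).symm

lemma tendsto_dual_rademacherLp_one (φ : StrongDual ℝ L1) :
    Tendsto (fun t => φ (rademacherLp 1 t)) atTop (𝓝 0) := by
  simpa only [ContinuousLinearMap.comp_apply, inclusionOfLE_rademacherLp] using
    orthonormal_rademacherLp_two.tendsto_dual_apply_zero (φ.comp (Lp.inclusionOfLE one_le_two))

end RademacherLp

section Haar

lemma coeFn_indL1 {s : Set ℝ} (hs : MeasurableSet s) :
    ⇑(indL1 s) =ᵐ[μ01] s.indicator fun _ => 1 := by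
  rw [indL1, dif_pos hs]
  exact indicatorConstLp_coeFn

variable {t j : ℕ}

lemma stdHaar_two_pow_add (hj : j < 2 ^ t) :
    stdHaar (2 ^ t + (j + 1)) =
      (2 ^ t : ℝ) •
        (indL1 (dyadicIco (t + 1) (2 * j)) - indL1 (dyadicIco (t + 1) (2 * j + 1))) := by
  have hlog : Nat.log2 (2 ^ t + (j + 1) - 1) = t := by
    rw [Nat.log2_eq_log_two]
    refine Nat.log_eq_of_pow_le_of_lt_pow (by omega) ?_
    rw [pow_succ]
    omega
  rw [stdHaar, if_neg (by have := Nat.one_le_two_pow (n := t); omega)]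
  simp only [hlog, Nat.add_sub_cancel_left, ← dyadicI_add_one]
  rw [show 2 * (j + 1) - 1 = 2 * j + 1 by omega, mul_add_one]

lemma rademacher_eq_sum_indicator (t : ℕ) (x : ℝ) :
    rademacher t x = ∑ j ∈ Finset.range (2 ^ t),
      ((dyadicIco (t + 1) (2 * j)).indicator (fun _ => 1) x
        - (dyadicIco (t + 1) (2 * j + 1)).indicator (fun _ => 1) x) := by
  rw [rademacher, dyadicStep, pow_succ', Finset.sum_range_two_mul]
  simp [pow_succ, pow_mul, sub_eq_add_neg]

lemma sum_stdHaar_eq_smul_rademacherLp (t : ℕ) :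
    ∑ k ∈ Finset.Icc 1 (2 ^ t), stdHaar (2 ^ t + k) = (2 ^ t : ℝ) • rademacherLp 1 t := by
  rw [← Finset.Ico_add_one_right_eq_Icc, Finset.sum_Ico_eq_sum_range, add_tsub_cancel_right,
    Finset.sum_congr rfl fun j hj => by
      rw [add_comm 1 j, stdHaar_two_pow_add (Finset.mem_range.1 hj)],
    ← Finset.smul_sum]
  congr 1
  have hrow : ∀ᵐ x ∂μ01, ∀ j : ℕ,
      (indL1 (dyadicIco (t + 1) (2 * j)) - indL1 (dyadicIco (t + 1) (2 * j + 1))) x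
        = (dyadicIco (t + 1) (2 * j)).indicator (fun _ => 1) x
          - (dyadicIco (t + 1) (2 * j + 1)).indicator (fun _ => 1) x := by
    refine ae_all_iff.2 fun j => ?_
    filter_upwards [Lp.coeFn_sub (indL1 (dyadicIco (t + 1) (2 * j)))
        (indL1 (dyadicIco (t + 1) (2 * j + 1))),
      coeFn_indL1 (measurableSet_dyadicIco (t + 1) (2 * j)),
      coeFn_indL1 (measurableSet_dyadicIco (t + 1) (2 * j + 1))] with x h h0 h1
    rw [h, Pi.sub_apply, h0, h1]
  refine Lp.ext ?_
  filter_upwards [Lp.coeFn_fun_finsetSum (Finset.range (2 ^ t)) fun j =>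
      indL1 (dyadicIco (t + 1) (2 * j)) - indL1 (dyadicIco (t + 1) (2 * j + 1)),
    hrow, coeFn_rademacherLp 1 t] with x hsum hrow_x hrad
  rw [hsum, hrad, rademacher_eq_sum_indicator]
  exact Finset.sum_congr rfl fun j _ => hrow_x j

end Haar

lemma CompletelyContinuous.tendsto_rademacherLp_one {Y : Type*} [NormedAddCommGroup Y]
    [NormedSpace ℝ Y] {T : L1 →L[ℝ] Y} (hT : CompletelyContinuous T) :
    Tendsto (fun t => T (rademacherLp 1 t)) atTop (𝓝 0) := by
  simpa only [map_zero] using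
    hT (rademacherLp 1) 0 fun φ => by simpa only [map_zero] using tendsto_dual_rademacherLp_one φ

theorem stmt6_general {X : Type*} [NormedAddCommGroup X] [NormedSpace ℝ X]
    (T : L1 →L[ℝ] X) (δ : ℝ) (hδ : 0 < δ)
    (h : ∀ n : ℕ, (2 ^ n : ℝ) * δ ≤
      ‖∑ k ∈ Finset.Icc 1 (2 ^ n), T (stdHaar (2 ^ n + k))‖) :
    ¬ CompletelyContinuous T := by
  intro hT
  have hlower (t : ℕ) : δ ≤ ‖T (rademacherLp 1 t)‖ := by
    have := h t
    rw [← map_sum, sum_stdHaar_eq_smul_rademacherLp, map_smul, norm_smul,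
      Real.norm_of_nonneg (by positivity)] at this
    exact le_of_mul_le_mul_left this (by positivity)
  have hzero := hT.tendsto_rademacherLp_one.norm
  rw [norm_zero] at hzero
  linarith [ge_of_tendsto' hzero hlower]

/-- If a bounded δ-Rademacher tree grows in `X`, then `X` fails the CCP: if
`T : L¹[0,1] → X` satisfies `‖Σ_{k=1}^{2^n} T h̃_{2^n+k}‖ ≥ 2^n δ` for all `n`,
then `T` is not completely continuous. -/
theorem stmt6 {X : Type*} [NormedAddCommGroup X] [NormedSpace ℝ X] [CompleteSpace X]
    (T : L1 →L[ℝ] X) (δ : ℝ) (hδ : 0 < δ)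
    (h : ∀ n : ℕ, (2 ^ n : ℝ) * δ ≤
      ‖∑ k ∈ Finset.Icc 1 (2 ^ n), T (stdHaar (2 ^ n + k))‖) :
    ¬ CompletelyContinuous T :=
  stmt6_general T δ hδ h
end
end

section
/- Let X be a real Banach space and let {x^n_k : n ≥ 0, 1 ≤ k ≤ 2^n} be a bounded tree in X with difference system {d_j}. Then there is a unique bounded linear operator T : L¹[0,1] → X such that T h̃_j = d_j for every j ≥ 1, where {h̃_j} is the standard Haar system; moreover T(2^n 1_{I^n_k}) = x^n_k for all n ≥ 0 and 1 ≤ k ≤ 2^n, and ‖T‖ = sup_{n,k} ‖x^n_k‖. -/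
/-!
The operator is the pointwise limit of the finite-rank operators
`T_n f = ∑_k (∫_{I^n_k} f) x^n_k`, all of norm at most `S = sup ‖x^n_k‖`. The tree identity gives
`T_N 1_{I^n_k} = 2^{-n} x^n_k` for every `N ≥ n`, so `T_n` converges on the span of the dyadic
indicators. That span is dense in `L¹`: its closure contains the indicators of the intervals with
dyadic endpoints, a π-system generating the Borel sets, hence by Dynkin's π-λ theorem all
indicators. Uniform boundedness then gives convergence on all of `L¹`, and `‖T‖ ≤ S`.
Conversely the Haar values fix the values on dyadic indicators, level by level, which gives
uniqueness, and the unit vectors `2^n 1_{I^n_k}` give `‖T‖ ≥ S`.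
-/

open MeasureTheory Filter Topology

noncomputable section

open scoped symmDiff

section UniformlyBoundedLimit

variable {𝕜 E F : Type*} [NontriviallyNormedField 𝕜] [NormedAddCommGroup E] [NormedSpace 𝕜 E]
  [NormedAddCommGroup F] [NormedSpace 𝕜 F]

theorem ContinuousLinearMap.cauchySeq_apply_of_dense_span {T : ℕ → E →L[𝕜] F} {C : ℝ}
    (hT : ∀ n, ‖T n‖ ≤ C) {G : Set E} (hG : Dense (Submodule.span 𝕜 G : Set E))
    (hcauchy : ∀ g ∈ G, CauchySeq fun n => T n g) (f : E) : CauchySeq fun n => T n f := by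
  have hspan : ∀ g ∈ Submodule.span 𝕜 G, CauchySeq fun n => T n g := by
    intro g hg
    induction hg using Submodule.span_induction with
    | mem g hg => exact hcauchy g hg
    | zero => simpa using cauchySeq_const (0 : F)
    | add g g' _ _ hg hg' => simp only [map_add]; exact hg.add hg'
    | smul c g _ hg =>
      simp only [map_smul]
      exact (uniformContinuous_const_smul c).comp_cauchySeq hg
  have hC : 0 ≤ C := (norm_nonneg _).trans (hT 0)
  rw [Metric.cauchySeq_iff]
  intro ε hε
  obtain ⟨g, hfg, hg⟩ := Metric.dense_iff.1 hG f (ε / (3 * (C + 1))) (by positivity)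
  obtain ⟨N, hN⟩ := Metric.cauchySeq_iff.1 (hspan g hg) (ε / 3) (by positivity)
  have hclose : ∀ k, dist (T k f) (T k g) ≤ ε / 3 := fun k => by
    rw [dist_eq_norm, ← map_sub]
    calc ‖T k (f - g)‖ ≤ C * ‖f - g‖ := (T k).le_of_opNorm_le (hT k) _
      _ ≤ C * (ε / (3 * (C + 1))) := by rw [← dist_eq_norm, dist_comm]; gcongr; exact le_of_lt hfg
      _ ≤ ε / 3 := by
        rw [mul_div_assoc', div_le_div_iff₀ (by positivity) (by positivity)]
        nlinarith
  refine ⟨N, fun m hm n hn => ?_⟩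
  calc dist (T m f) (T n f) ≤ dist (T m f) (T m g) + dist (T m g) (T n g) + dist (T n g) (T n f) :=
        dist_triangle4 _ _ _ _
    _ < ε := by linarith [hclose m, hclose n, hN m hm n hn, dist_comm (T n f) (T n g)]

theorem ContinuousLinearMap.exists_tendsto_of_dense_span [CompleteSpace F] {T : ℕ → E →L[𝕜] F}
    {C : ℝ} (hT : ∀ n, ‖T n‖ ≤ C) {G : Set E} (hG : Dense (Submodule.span 𝕜 G : Set E))
    (hcauchy : ∀ g ∈ G, CauchySeq fun n => T n g) :
    ∃ L : E →L[𝕜] F, ‖L‖ ≤ C ∧ ∀ f, Tendsto (fun n => T n f) atTop (𝓝 (L f)) := by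
  choose L hL using fun f =>
    cauchySeq_tendsto_of_complete (cauchySeq_apply_of_dense_span hT hG hcauchy f)
  have hlim : Tendsto (fun n f => (T n : E →ₗ[𝕜] F) f) atTop (𝓝 L) := tendsto_pi_nhds.2 hL
  refine ⟨(linearMapOfTendsto L _ hlim).mkContinuous C fun f => ?_,
    LinearMap.mkContinuous_norm_le _ ((norm_nonneg _).trans (hT 0)) _, hL⟩
  exact le_of_tendsto (hL f).norm (Eventually.of_forall fun n => (T n).le_of_opNorm_le (hT n) f)

end UniformlyBoundedLimit

section IndicatorDynkin

variable {α E : Type*} [MeasurableSpace α] {μ : Measure α} [NormedAddCommGroup E] {p : ENNReal}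

theorem indicatorConstLp_smul {𝕜 : Type*} [NormedRing 𝕜] [Module 𝕜 E] [IsBoundedSMul 𝕜 E]
    {s : Set α} (hs : MeasurableSet s) (hμs : μ s ≠ ⊤) (c : 𝕜) (e : E) :
    indicatorConstLp p hs hμs (c • e) = c • indicatorConstLp p hs hμs e := by
  ext1
  filter_upwards [indicatorConstLp_coeFn (c := c • e), indicatorConstLp_coeFn (c := e),
    Lp.coeFn_smul c (indicatorConstLp p hs hμs e)] with a h1 h2 h3
  rw [h1, h3, Pi.smul_apply, h2, Set.indicator_const_smul_apply]

theorem MeasurableSet.accumulate {f : ℕ → Set α} (hf : ∀ i, MeasurableSet (f i)) (n : ℕ) :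
    MeasurableSet (Set.accumulate f n) := by
  rw [Set.accumulate_def]
  exact .iUnion fun i => .iUnion fun _ => hf i

variable [IsFiniteMeasure μ] [Fact (1 ≤ p)]

theorem tendsto_indicatorConstLp_accumulate (hp : p ≠ ⊤) {c : E} {f : ℕ → Set α}
    (hf : ∀ i, MeasurableSet (f i)) :
    Tendsto (fun n => indicatorConstLp p (.accumulate hf n) (measure_ne_top μ _) c) atTop
      (𝓝 (indicatorConstLp p (.iUnion hf) (measure_ne_top μ _) c)) := by
  refine tendsto_indicatorConstLp_set hp ?_
  have hdiff : ∀ n, μ (Set.accumulate f n ∆ ⋃ i, f i) = μ (⋃ i, f i) - μ (Set.accumulate f n) :=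
    fun n => by
      rw [symmDiff_of_le (Set.accumulate_subset_iUnion n),
        measure_sdiff (Set.accumulate_subset_iUnion n)
          (MeasurableSet.accumulate hf n).nullMeasurableSet (measure_ne_top μ _)]
  simpa [hdiff] using ENNReal.Tendsto.sub (tendsto_const_nhds (x := μ (⋃ i, f i)))
    (tendsto_measure_iUnion_accumulate (μ := μ) (f := f)) (Or.inl (measure_ne_top μ _))

theorem indicatorConstLp_mem_of_isPiSystem (hp : p ≠ ⊤) {c : E} {V : AddSubgroup (Lp E p μ)}
    (hV : IsClosed (V : Set (Lp E p μ))) {S : Set (Set α)}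
    (hgen : ‹MeasurableSpace α› = MeasurableSpace.generateFrom S) (hS : IsPiSystem S)
    (huniv : indicatorConstLp p .univ (measure_ne_top μ _) c ∈ V)
    (hbasic : ∀ s (hs : MeasurableSet s), s ∈ S → indicatorConstLp p hs (measure_ne_top μ s) c ∈ V)
    {s : Set α} (hs : MeasurableSet s) : indicatorConstLp p hs (measure_ne_top μ s) c ∈ V := by
  induction s, hs using MeasurableSpace.induction_on_inter hgen hS with
  | empty => simp
  | basic t ht => exact hbasic t _ ht
  | compl t ht iht =>
    have h := indicatorConstLp_disjoint_union (p := p) ht ht.compl (measure_ne_top μ _)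
      (measure_ne_top μ _) disjoint_compl_right c
    simp only [Set.union_compl_self] at h
    rw [eq_sub_of_add_eq' h.symm]
    exact V.sub_mem huniv iht
  | iUnion f hdisj hf ihf =>
    have hacc : ∀ n, indicatorConstLp p (.accumulate hf n) (measure_ne_top μ _) c ∈ V := by
      intro n
      induction n with
      | zero => simpa [Set.accumulate_zero_nat] using ihf 0
      | succ n ih =>
        have h := indicatorConstLp_disjoint_union (p := p) (.accumulate hf n) (hf (n + 1))
          (measure_ne_top μ _) (measure_ne_top μ _) (Set.disjoint_accumulate hdisj n.lt_succ_self) c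
        simp only [← Set.accumulate_succ] at h
        rw [h]
        exact V.add_mem ih (ihf _)
    exact hV.mem_of_tendsto (tendsto_indicatorConstLp_accumulate hp hf) (.of_forall hacc)

end IndicatorDynkin

lemma indL1_of_measurableSet {s : Set ℝ} (hs : MeasurableSet s) :
    indL1 s = indicatorConstLp 1 hs (μ01_ne_top s) 1 :=
  dif_pos hs

lemma indL1_union {s t : Set ℝ} (hs : MeasurableSet s) (ht : MeasurableSet t)
    (hst : Disjoint s t) : indL1 (s ∪ t) = indL1 s + indL1 t := by
  rw [indL1_of_measurableSet hs, indL1_of_measurableSet ht, indL1_of_measurableSet (hs.union ht),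
    ← indicatorConstLp_disjoint_union hs ht _ _ hst]

lemma indL1_congr_ae {s t : Set ℝ} (hs : MeasurableSet s) (ht : MeasurableSet t)
    (hst : s =ᵐ[μ01] t) : indL1 s = indL1 t := by
  rw [indL1_of_measurableSet hs, indL1_of_measurableSet ht,
    indicatorConstLp_inj hs _ ht _ one_ne_zero]
  exact hst

lemma ae_mem_Ico_zero_one : ∀ᵐ y ∂μ01, y ∈ Set.Ico (0 : ℝ) 1 := by
  filter_upwards [ae_restrict_mem measurableSet_Icc,
    ae_restrict_of_ae (Ico_ae_eq_Icc (μ := volume) (a := (0 : ℝ)) (b := 1))] with y hy h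
  show Set.Ico (0 : ℝ) 1 y
  rwa [h]

lemma indL1_eq_of_Ico_subset {s : Set ℝ} (hs : MeasurableSet s) (h : Set.Ico 0 1 ⊆ s) :
    indL1 s = indL1 (Set.Ico 0 1) := by
  refine indL1_congr_ae hs measurableSet_Ico ?_
  filter_upwards [ae_mem_Ico_zero_one] with y hy
  exact propext ⟨fun _ => hy, fun hy => h hy⟩

@[simp]
lemma indL1_empty : indL1 ∅ = 0 := by
  rw [indL1_of_measurableSet .empty, indicatorConstLp_empty]

lemma indL1_eq_zero_of_disjoint {s : Set ℝ} (hs : MeasurableSet s) (h : Disjoint s (Set.Ico 0 1)) :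
    indL1 s = 0 := by
  rw [indL1_congr_ae hs .empty ?_, indL1_empty]
  filter_upwards [ae_mem_Ico_zero_one] with y hy
  exact propext ⟨fun hys => Set.disjoint_left.1 h hys hy, False.elim⟩

lemma measurableSet_dyadicI (n k : ℕ) : MeasurableSet (dyadicI n k) := measurableSet_Ico

lemma dyadicI_zero_one : dyadicI 0 1 = Set.Ico 0 1 := by
  norm_num [dyadicI]

lemma dyadicI_subset_Icc {n k : ℕ} (hk1 : 1 ≤ k) (hk2 : k ≤ 2 ^ n) :
    dyadicI n k ⊆ Set.Icc 0 1 := by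
  have h1 : (1 : ℝ) ≤ k := by exact_mod_cast hk1
  have h2 : (k : ℝ) ≤ 2 ^ n := by exact_mod_cast hk2
  refine Set.Ico_subset_Icc_self.trans (Set.Icc_subset_Icc ?_ ?_)
  · exact div_nonneg (by linarith) (by positivity)
  · rwa [div_le_one (by positivity)]

lemma measureReal_μ01_dyadicI {n k : ℕ} (hk1 : 1 ≤ k) (hk2 : k ≤ 2 ^ n) :
    μ01.real (dyadicI n k) = ((2 : ℝ) ^ n)⁻¹ := by
  rw [measureReal_restrict_apply (measurableSet_dyadicI n k),
    Set.inter_eq_self_of_subset_left (dyadicI_subset_Icc hk1 hk2), dyadicI, Real.volume_real_Ico,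
    max_eq_left (by rw [← sub_div, sub_sub_cancel]; positivity)]
  ring

lemma dyadicI_disjoint {n k j : ℕ} (h : k ≠ j) : Disjoint (dyadicI n k) (dyadicI n j) := by
  refine Set.disjoint_left.2 fun y hk hj => h ?_
  obtain ⟨hk1, hk2⟩ := hk
  obtain ⟨hj1, hj2⟩ := hj
  have hp : (0 : ℝ) < 2 ^ n := by positivity
  rw [div_le_iff₀ hp] at hk1 hj1
  rw [lt_div_iff₀ hp] at hk2 hj2
  have hkj : (k : ℝ) < j + 1 := by linarith
  have hjk : (j : ℝ) < k + 1 := by linarith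
  exact le_antisymm (Nat.lt_succ_iff.1 (by exact_mod_cast hkj))
    (Nat.lt_succ_iff.1 (by exact_mod_cast hjk))

lemma dyadicI_eq_union {n k : ℕ} (hk : 1 ≤ k) :
    dyadicI n k = dyadicI (n + 1) (2 * k - 1) ∪ dyadicI (n + 1) (2 * k) := by
  have hcast : ((2 * k - 1 : ℕ) : ℝ) = 2 * k - 1 := by
    rw [Nat.cast_sub (by omega)]; push_cast; ring
  rw [dyadicI, dyadicI, dyadicI, hcast, Nat.cast_mul, Nat.cast_ofNat,
    Set.Ico_union_Ico_eq_Ico (by gcongr; linarith) (by gcongr; linarith)]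
  congr 1 <;> field_simp <;> ring

lemma indL1_dyadicI_eq_add {n k : ℕ} (hk : 1 ≤ k) :
    indL1 (dyadicI n k) =
      indL1 (dyadicI (n + 1) (2 * k - 1)) + indL1 (dyadicI (n + 1) (2 * k)) := by
  rw [dyadicI_eq_union hk]
  exact indL1_union (measurableSet_dyadicI _ _) (measurableSet_dyadicI _ _)
    (dyadicI_disjoint (by omega))

def dyadicIndicators : Set L1 := {f | ∃ n k : ℕ, 1 ≤ k ∧ k ≤ 2 ^ n ∧ f = indL1 (dyadicI n k)}

lemma indL1_Ico_int_mem_span (n : ℕ) (j : ℤ) :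
    indL1 (Set.Ico (j / 2 ^ n) ((j + 1) / 2 ^ n)) ∈ Submodule.span ℝ dyadicIndicators := by
  have hp : (0 : ℝ) < 2 ^ n := by positivity
  by_cases hj : 0 ≤ j ∧ j < 2 ^ n
  · have hlt : (j.toNat : ℤ) < ((2 ^ n : ℕ) : ℤ) := by
      rw [Int.toNat_of_nonneg hj.1]; exact_mod_cast hj.2
    refine Submodule.subset_span ⟨n, j.toNat + 1, by omega, by omega, ?_⟩
    have hcast : ((j.toNat : ℕ) : ℝ) = j := by exact_mod_cast Int.toNat_of_nonneg hj.1
    rw [dyadicI]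
    push_cast
    rw [hcast, add_sub_cancel_right]
  · rw [indL1_eq_zero_of_disjoint measurableSet_Ico]
    · exact zero_mem _
    rw [Set.Ico_disjoint_Ico]
    rcases not_and_or.1 hj with hj | hj
    · have : (j : ℝ) + 1 ≤ 0 := by exact_mod_cast (by omega : j + 1 ≤ 0)
      exact (min_le_left _ _).trans
        ((div_nonpos_of_nonpos_of_nonneg this hp.le).trans (le_max_right _ _))
    · have : (2 : ℝ) ^ n ≤ j := by exact_mod_cast (by omega : (2 : ℤ) ^ n ≤ j)
      exact (min_le_right _ _).trans (((one_le_div hp).2 this).trans (le_max_left _ _))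

lemma indL1_Ico_mem_span (n : ℕ) {a b : ℤ} (hab : a ≤ b) :
    indL1 (Set.Ico (a / 2 ^ n) (b / 2 ^ n)) ∈ Submodule.span ℝ dyadicIndicators := by
  induction b, hab using Int.leInduction with
  | base => simp
  | succ b hab ih =>
    have hle : (a : ℝ) / 2 ^ n ≤ b / 2 ^ n := by gcongr
    push_cast
    rw [← Set.Ico_union_Ico_eq_Ico hle (by gcongr; linarith),
      indL1_union measurableSet_Ico measurableSet_Ico Set.Ico_disjoint_Ico_same]
    exact add_mem ih (indL1_Ico_int_mem_span n b)

lemma indL1_Ico_div_two_pow_mem_span {n m : ℕ} {a b : ℤ} (hab : (a : ℝ) / 2 ^ n < b / 2 ^ m) :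
    indL1 (Set.Ico (a / 2 ^ n) (b / 2 ^ m)) ∈ Submodule.span ℝ dyadicIndicators := by
  have rescale : ∀ (c : ℤ) (k l : ℕ), (c : ℝ) / 2 ^ k = ((c * 2 ^ l : ℤ) : ℝ) / 2 ^ (k + l) :=
    fun c k l => by push_cast; rw [pow_add]; field_simp
  rw [rescale a n m, rescale b m n, add_comm m n] at hab ⊢
  refine indL1_Ico_mem_span _ ?_
  exact_mod_cast ((div_lt_div_iff_of_pos_right (by positivity)).1 hab).le

lemma dense_dyadicRationals : Dense {x : ℝ | ∃ (n : ℕ) (a : ℤ), x = a / 2 ^ n} := by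
  refine dense_of_exists_between fun x y hxy => ?_
  obtain ⟨n, hn⟩ := exists_pow_lt_of_lt_one (sub_pos.2 hxy) (by norm_num : (2⁻¹ : ℝ) < 1)
  have hp : (0 : ℝ) < 2 ^ n := by positivity
  refine ⟨(⌊x * 2 ^ n⌋ + 1 : ℤ) / 2 ^ n, ⟨n, _, rfl⟩, ?_, ?_⟩
  · rw [lt_div_iff₀ hp]; push_cast; exact Int.lt_floor_add_one _
  · rw [div_lt_iff₀ hp]
    have := Int.floor_le (x * 2 ^ n)
    rw [inv_pow, inv_lt_iff_one_lt_mul₀ hp] at hn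
    push_cast; nlinarith

lemma dense_span_dyadicIndicators : Dense (Submodule.span ℝ dyadicIndicators : Set L1) := by
  set V := (Submodule.span ℝ dyadicIndicators).topologicalClosure
  have hV : IsClosed (V : Set L1) := Submodule.isClosed_topologicalClosure _
  have hind : ∀ s (hs : MeasurableSet s), indicatorConstLp 1 hs (μ01_ne_top s) (1 : ℝ) ∈ V := by
    intro s hs
    refine indicatorConstLp_mem_of_isPiSystem (V := V.toAddSubgroup) ENNReal.one_ne_top hV
      (BorelSpace.measurable_eq.trans dense_dyadicRationals.borel_eq_generateFrom_Ico_mem)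
      (isPiSystem_Ico_mem _ _) ?_ ?_ hs
    · rw [← indL1_of_measurableSet, indL1_eq_of_Ico_subset .univ (Set.subset_univ _),
        ← dyadicI_zero_one]
      exact Submodule.le_topologicalClosure _ (Submodule.subset_span ⟨0, 1, le_rfl, le_rfl, rfl⟩)
    · rintro _ _ ⟨_, ⟨n, a, rfl⟩, _, ⟨m, b, rfl⟩, hab, rfl⟩
      rw [← indL1_of_measurableSet]
      exact Submodule.le_topologicalClosure _ (indL1_Ico_div_two_pow_mem_span hab)
  suffices ∀ f, f ∈ V by
    rw [Submodule.dense_iff_topologicalClosure_eq_top, eq_top_iff]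
    exact fun f _ => this f
  intro f
  induction f using Lp.induction ENNReal.one_ne_top with
  | indicatorConst c hs hμs =>
    have h := indicatorConstLp_smul (p := 1) hs hμs.ne c (1 : ℝ)
    rw [smul_eq_mul, mul_one] at h
    rw [Lp.simpleFunc.coe_indicatorConst, h]
    exact V.smul_mem c (hind _ hs)
  | add _ _ _ hf hg => exact V.add_mem hf hg
  | isClosed => exact hV

section SetIntegralCLM

variable {α E : Type*} [MeasurableSpace α] [NormedAddCommGroup E] [NormedSpace ℝ E]
  [CompleteSpace E]

def setIntegralCLM (μ : Measure α) (s : Set α) : Lp E 1 μ →L[ℝ] E :=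
  L1.integralCLM.comp (LpToLpRestrictCLM α E ℝ μ 1 s)

lemma setIntegralCLM_apply (μ : Measure α) (s : Set α) (f : Lp E 1 μ) :
    setIntegralCLM μ s f = ∫ y in s, f y ∂μ := by
  rw [setIntegralCLM, ContinuousLinearMap.comp_apply, ← L1.integral_eq, L1.integral_eq_integral]
  exact integral_congr_ae (LpToLpRestrictCLM_coeFn ℝ s f)

end SetIntegralCLM

lemma setIntegralCLM_indL1 {s t : Set ℝ} (hs : MeasurableSet s) (ht : MeasurableSet t) :
    setIntegralCLM μ01 s (indL1 t) = μ01.real (t ∩ s) := by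
  rw [setIntegralCLM_apply, indL1_of_measurableSet ht, setIntegral_indicatorConstLp hs ht]
  simp [Set.inter_comm]

lemma setIntegralCLM_dyadicI_indL1 {n k j : ℕ} (hj1 : 1 ≤ j) (hj2 : j ≤ 2 ^ n) :
    setIntegralCLM μ01 (dyadicI n k) (indL1 (dyadicI n j)) =
      if k = j then ((2 : ℝ) ^ n)⁻¹ else 0 := by
  rw [setIntegralCLM_indL1 (measurableSet_dyadicI n k) (measurableSet_dyadicI n j)]
  split_ifs with h
  · rw [h, Set.inter_self, measureReal_μ01_dyadicI hj1 hj2]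
  · rw [(dyadicI_disjoint (Ne.symm h)).inter_eq, measureReal_empty]

def IsDyadicTree {X : Type*} [AddCommGroup X] [Module ℝ X] (x : ℕ → ℕ → X) : Prop :=
  ∀ n k, 1 ≤ k → k ≤ 2 ^ n → x n k = (2⁻¹ : ℝ) • (x (n + 1) (2 * k - 1) + x (n + 1) (2 * k))

section TreeApprox

variable {X : Type*} [NormedAddCommGroup X] [NormedSpace ℝ X]

def treeApprox (x : ℕ → ℕ → X) (n : ℕ) : L1 →L[ℝ] X :=
  ∑ k ∈ Finset.Icc 1 (2 ^ n), (setIntegralCLM μ01 (dyadicI n k)).smulRight (x n k)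

lemma treeApprox_apply (x : ℕ → ℕ → X) (n : ℕ) (f : L1) :
    treeApprox x n f = ∑ k ∈ Finset.Icc 1 (2 ^ n), setIntegralCLM μ01 (dyadicI n k) f • x n k := by
  simp [treeApprox]

lemma treeApprox_indL1_dyadicI (x : ℕ → ℕ → X) {n j : ℕ} (hj1 : 1 ≤ j) (hj2 : j ≤ 2 ^ n) :
    treeApprox x n (indL1 (dyadicI n j)) = ((2 : ℝ) ^ n)⁻¹ • x n j := by
  rw [treeApprox_apply, Finset.sum_eq_single_of_mem j (Finset.mem_Icc.2 ⟨hj1, hj2⟩),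
    setIntegralCLM_dyadicI_indL1 hj1 hj2, if_pos rfl]
  intro k _ hkj
  rw [setIntegralCLM_dyadicI_indL1 hj1 hj2, if_neg hkj, zero_smul]

lemma treeApprox_add_indL1_dyadicI {x : ℕ → ℕ → X} (htree : IsDyadicTree x)
    (d : ℕ) {m j : ℕ} (hj1 : 1 ≤ j) (hj2 : j ≤ 2 ^ m) :
    treeApprox x (m + d) (indL1 (dyadicI m j)) = ((2 : ℝ) ^ m)⁻¹ • x m j := by
  induction d generalizing m j with
  | zero => exact treeApprox_indL1_dyadicI x hj1 hj2
  | succ d ih =>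
    have hj2' : 2 * j ≤ 2 ^ (m + 1) := by rw [pow_succ]; omega
    rw [indL1_dyadicI_eq_add hj1, map_add, show m + (d + 1) = m + 1 + d by ring,
      ih (by omega) (by omega), ih (by omega) hj2', htree m j hj1 hj2, pow_succ, mul_inv]
    module

lemma tendsto_treeApprox_indL1_dyadicI {x : ℕ → ℕ → X} (htree : IsDyadicTree x)
    {m j : ℕ} (hj1 : 1 ≤ j) (hj2 : j ≤ 2 ^ m) :
    Tendsto (fun n => treeApprox x n (indL1 (dyadicI m j))) atTop
      (𝓝 (((2 : ℝ) ^ m)⁻¹ • x m j)) := by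
  refine tendsto_atTop_of_eventually_const (i₀ := m) fun n hn => ?_
  obtain ⟨d, rfl⟩ := Nat.exists_eq_add_of_le hn
  exact treeApprox_add_indL1_dyadicI htree d hj1 hj2

lemma norm_treeApprox_le (x : ℕ → ℕ → X) (n : ℕ) {C : ℝ} (hC : 0 ≤ C)
    (hx : ∀ k, 1 ≤ k → k ≤ 2 ^ n → ‖x n k‖ ≤ C) : ‖treeApprox x n‖ ≤ C := by
  refine ContinuousLinearMap.opNorm_le_bound _ hC fun f => ?_
  have hdisj : (Finset.Icc 1 (2 ^ n) : Set ℕ).Pairwise (Function.onFun Disjoint (dyadicI n)) :=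
    fun k _ j _ hkj => dyadicI_disjoint hkj
  calc ‖treeApprox x n f‖
      ≤ ∑ k ∈ Finset.Icc 1 (2 ^ n), ‖setIntegralCLM μ01 (dyadicI n k) f‖ * ‖x n k‖ := by
        rw [treeApprox_apply]
        refine (norm_sum_le _ _).trans (Finset.sum_le_sum fun k _ => (norm_smul _ _).le)
    _ ≤ ∑ k ∈ Finset.Icc 1 (2 ^ n), (∫ y in dyadicI n k, ‖f y‖ ∂μ01) * C := by
        refine Finset.sum_le_sum fun k hk => ?_
        obtain ⟨hk1, hk2⟩ := Finset.mem_Icc.1 hk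
        rw [setIntegralCLM_apply]
        exact mul_le_mul (norm_integral_le_integral_norm _) (hx k hk1 hk2) (norm_nonneg _)
          (integral_nonneg fun _ => norm_nonneg _)
    _ = (∫ y in ⋃ k ∈ Finset.Icc 1 (2 ^ n), dyadicI n k, ‖f y‖ ∂μ01) * C := by
        rw [← Finset.sum_mul, integral_biUnion_finset _ (fun k _ => measurableSet_dyadicI n k) hdisj
          fun k _ => (L1.integrable_coeFn f).norm.integrableOn]
    _ ≤ (∫ y, ‖f y‖ ∂μ01) * C := by
        refine mul_le_mul_of_nonneg_right ?_ hC
        exact setIntegral_le_integral (L1.integrable_coeFn f).norm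
          (Eventually.of_forall fun _ => norm_nonneg _)
    _ = C * ‖f‖ := by rw [L1.norm_eq_integral_norm, mul_comm]

theorem exists_opNorm_le_apply_indL1_dyadicI [CompleteSpace X] {x : ℕ → ℕ → X}
    (htree : IsDyadicTree x) {C : ℝ} (hC : 0 ≤ C) (hx : ∀ n k, 1 ≤ k → k ≤ 2 ^ n → ‖x n k‖ ≤ C) :
    ∃ T : L1 →L[ℝ] X, ‖T‖ ≤ C ∧
      ∀ n k, 1 ≤ k → k ≤ 2 ^ n → T (indL1 (dyadicI n k)) = ((2 : ℝ) ^ n)⁻¹ • x n k := by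
  obtain ⟨T, hTC, hT⟩ := ContinuousLinearMap.exists_tendsto_of_dense_span
    (fun n => norm_treeApprox_le x n hC (hx n)) dense_span_dyadicIndicators <| by
      rintro _ ⟨n, k, hk1, hk2, rfl⟩
      exact (tendsto_treeApprox_indL1_dyadicI htree hk1 hk2).cauchySeq
  exact ⟨T, hTC, fun n k hk1 hk2 =>
    tendsto_nhds_unique (hT _) (tendsto_treeApprox_indL1_dyadicI htree hk1 hk2)⟩

end TreeApprox

lemma stdHaar_one : stdHaar 1 = indL1 (dyadicI 0 1) := by
  rw [stdHaar, if_pos rfl, dyadicI_zero_one]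
  exact indL1_eq_of_Ico_subset measurableSet_Icc Set.Ico_subset_Icc_self

lemma stdHaar_two_pow_add_s7 {n k : ℕ} (hk1 : 1 ≤ k) (hk2 : k ≤ 2 ^ n) :
    stdHaar (2 ^ n + k) =
      (2 ^ n : ℝ) • (indL1 (dyadicI (n + 1) (2 * k - 1)) - indL1 (dyadicI (n + 1) (2 * k))) := by
  have hlog : Nat.log2 (2 ^ n + k - 1) = n := by
    rw [Nat.log2_eq_log_two]
    apply Nat.log_eq_of_pow_le_of_lt_pow
    · omega
    · rw [pow_succ]; omega
  have hne : 2 ^ n + k ≠ 1 := by have := Nat.one_le_two_pow (n := n); omega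
  simp only [stdHaar, if_neg hne, hlog, Nat.add_sub_cancel_left]

section Haar

variable {X : Type*} [AddCommGroup X] [Module ℝ X]

theorem apply_stdHaar_iff_apply_indL1_dyadicI {x : ℕ → ℕ → X} (htree : IsDyadicTree x)
    (T : L1 →ₗ[ℝ] X) :
    (T (stdHaar 1) = x 0 1 ∧ ∀ n k, 1 ≤ k → k ≤ 2 ^ n →
        T (stdHaar (2 ^ n + k)) = (2⁻¹ : ℝ) • (x (n+1) (2*k-1) - x (n+1) (2*k))) ↔
      ∀ n k, 1 ≤ k → k ≤ 2 ^ n → T (indL1 (dyadicI n k)) = ((2 : ℝ) ^ n)⁻¹ • x n k := by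
  constructor
  · rintro ⟨h1, h2⟩ n
    induction n with
    | zero =>
      intro k hk1 hk2
      obtain rfl : k = 1 := by omega
      rw [← stdHaar_one, h1, pow_zero, inv_one, one_smul]
    | succ n ih =>
      intro k' hk1 hk2
      obtain ⟨k, hk1, hk2, hk'⟩ : ∃ k, 1 ≤ k ∧ k ≤ 2 ^ n ∧ (k' = 2 * k - 1 ∨ k' = 2 * k) :=
        ⟨(k' + 1) / 2, by omega, by rw [pow_succ] at hk2; omega, by omega⟩
      have hsum : T (indL1 (dyadicI (n + 1) (2 * k - 1))) + T (indL1 (dyadicI (n + 1) (2 * k))) =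
          ((2 : ℝ) ^ n)⁻¹ • (2⁻¹ : ℝ) • (x (n + 1) (2 * k - 1) + x (n + 1) (2 * k)) := by
        rw [← map_add, ← indL1_dyadicI_eq_add hk1, ih k hk1 hk2, ← htree n k hk1 hk2]
      have hdiff : T (indL1 (dyadicI (n + 1) (2 * k - 1))) - T (indL1 (dyadicI (n + 1) (2 * k))) =
          ((2 : ℝ) ^ n)⁻¹ • (2⁻¹ : ℝ) • (x (n + 1) (2 * k - 1) - x (n + 1) (2 * k)) := by
        rw [← h2 n k hk1 hk2, stdHaar_two_pow_add_s7 hk1 hk2, map_smul, map_sub, smul_smul,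
          inv_mul_cancel₀ (by positivity), one_smul]
      rw [pow_succ, mul_inv]
      rcases hk' with rfl | rfl
      · linear_combination (norm := module) (2⁻¹ : ℝ) • (hsum + hdiff)
      · linear_combination (norm := module) (2⁻¹ : ℝ) • (hsum - hdiff)
  · intro h
    refine ⟨by rw [stdHaar_one, h 0 1 le_rfl le_rfl, pow_zero, inv_one, one_smul],
      fun n k hk1 hk2 => ?_⟩
    rw [stdHaar_two_pow_add_s7 hk1 hk2, map_smul, map_sub, h (n + 1) (2 * k - 1) (by omega) (by omega),
      h (n + 1) (2 * k) (by omega) (by rw [pow_succ]; omega)]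
    match_scalars <;> field_simp <;> ring

end Haar

lemma norm_two_pow_smul_indL1_dyadicI {n k : ℕ} (hk1 : 1 ≤ k) (hk2 : k ≤ 2 ^ n) :
    ‖(2 ^ n : ℝ) • indL1 (dyadicI n k)‖ = 1 := by
  rw [norm_smul, indL1_of_measurableSet (measurableSet_dyadicI n k),
    norm_indicatorConstLp one_ne_zero ENNReal.one_ne_top, measureReal_μ01_dyadicI hk1 hk2]
  simp

lemma le_iSup_biSup_of_le {f : ℕ → ℕ → ℝ} {s : ℕ → Finset ℕ} {M : ℝ}
    (hM : ∀ n, ∀ k ∈ s n, f n k ≤ M) {n k : ℕ} (hk : k ∈ s n) :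
    f n k ≤ ⨆ n, ⨆ k ∈ s n, f n k := by
  have hinner : ∀ n k, ⨆ _ : k ∈ s n, f n k ≤ max M 0 := fun n k =>
    Real.iSup_le (fun hk => (hM n k hk).trans (le_max_left _ _)) (le_max_right _ _)
  have hmiddle : ∀ n, ⨆ k ∈ s n, f n k ≤ max M 0 := fun n =>
    Real.iSup_le (hinner n) (le_max_right _ _)
  calc f n k = ⨆ _ : k ∈ s n, f n k := (ciSup_pos (f := fun _ => f n k) hk).symm
    _ ≤ ⨆ k ∈ s n, f n k := le_ciSup ⟨_, Set.forall_mem_range.2 (hinner n)⟩ k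
    _ ≤ ⨆ n, ⨆ k ∈ s n, f n k := le_ciSup ⟨_, Set.forall_mem_range.2 hmiddle⟩ n

/-- A bounded tree `{x n k}` in `X` corresponds to a unique bounded linear operator
`T : L¹[0,1] → X` with `T h̃_j = d_j` for the difference system `{d_j}`; moreover
`T (2^n 1_{I^n_k}) = x n k` and `‖T‖ = sup_{n,k} ‖x n k‖`. -/
theorem stmt7 {X : Type*} [NormedAddCommGroup X] [NormedSpace ℝ X] [CompleteSpace X]
    (x : ℕ → ℕ → X)
    (htree : ∀ n k, 1 ≤ k → k ≤ 2 ^ n →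
      x n k = (2⁻¹ : ℝ) • (x (n+1) (2*k-1) + x (n+1) (2*k)))
    (M : ℝ) (hM : ∀ n k, 1 ≤ k → k ≤ 2 ^ n → ‖x n k‖ ≤ M) :
    ∃ T : L1 →L[ℝ] X,
      (T (stdHaar 1) = x 0 1 ∧
        ∀ n k, 1 ≤ k → k ≤ 2 ^ n →
          T (stdHaar (2 ^ n + k)) = (2⁻¹ : ℝ) • (x (n+1) (2*k-1) - x (n+1) (2*k))) ∧
      (∀ T' : L1 →L[ℝ] X,
        (T' (stdHaar 1) = x 0 1 ∧
          ∀ n k, 1 ≤ k → k ≤ 2 ^ n →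
            T' (stdHaar (2 ^ n + k)) = (2⁻¹ : ℝ) • (x (n+1) (2*k-1) - x (n+1) (2*k))) →
        T' = T) ∧
      (∀ n k, 1 ≤ k → k ≤ 2 ^ n → T ((2 ^ n : ℝ) • indL1 (dyadicI n k)) = x n k) ∧
      ‖T‖ = ⨆ n : ℕ, ⨆ k ∈ Finset.Icc 1 (2 ^ n), ‖x n k‖ := by
  set S := ⨆ n : ℕ, ⨆ k ∈ Finset.Icc 1 (2 ^ n), ‖x n k‖
  have hxS : ∀ n k, 1 ≤ k → k ≤ 2 ^ n → ‖x n k‖ ≤ S := fun n k hk1 hk2 =>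
    le_iSup_biSup_of_le (fun n k hk => hM n k (Finset.mem_Icc.1 hk).1 (Finset.mem_Icc.1 hk).2)
      (Finset.mem_Icc.2 ⟨hk1, hk2⟩)
  obtain ⟨T, hTS, hT⟩ :=
    exists_opNorm_le_apply_indL1_dyadicI htree ((norm_nonneg _).trans (hxS 0 1 le_rfl le_rfl)) hxS
  have hTx : ∀ n k, 1 ≤ k → k ≤ 2 ^ n → T ((2 ^ n : ℝ) • indL1 (dyadicI n k)) = x n k := by
    intro n k hk1 hk2
    rw [map_smul, hT n k hk1 hk2, smul_smul, mul_inv_cancel₀ (by positivity), one_smul]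
  refine ⟨T, (apply_stdHaar_iff_apply_indL1_dyadicI htree T.toLinearMap).2 hT,
    fun T' hT' => ?_, hTx, le_antisymm hTS ?_⟩
  · refine ContinuousLinearMap.ext_on dense_span_dyadicIndicators ?_
    rintro _ ⟨n, k, hk1, hk2, rfl⟩
    exact ((apply_stdHaar_iff_apply_indL1_dyadicI htree T'.toLinearMap).1 hT' n k hk1 hk2).trans
      (hT n k hk1 hk2).symm
  · have hT0 := norm_nonneg T
    refine Real.iSup_le (fun n => Real.iSup_le (fun k => Real.iSup_le (fun hk => ?_) hT0) hT0) hT0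
    obtain ⟨hk1, hk2⟩ := Finset.mem_Icc.1 hk
    calc ‖x n k‖ = ‖T ((2 ^ n : ℝ) • indL1 (dyadicI n k))‖ := by rw [hTx n k hk1 hk2]
      _ ≤ ‖T‖ * ‖(2 ^ n : ℝ) • indL1 (dyadicI n k)‖ := T.le_opNorm _
      _ = ‖T‖ := by rw [norm_two_pow_smul_indL1_dyadicI hk1 hk2, mul_one]
end
end

section
/- Let X be a real Banach space which contains ℓ∞^n uniformly: there is a constant C such that for every n there is a linear map J_n : ℓ∞^n → X with ‖a‖ ≤ ‖J_n a‖ ≤ C‖a‖ for all a ∈ ℓ∞^n. Then every closed subspace Z of X of finite codimension contains, for every n and every ε > 0, a (1+ε)-isomorphic copy of ℓ∞^n: a linear map J : ℓ∞^n → Z with ‖a‖ ≤ ‖J a‖ ≤ (1+ε)‖a‖ for all a ∈ ℓ∞^n. -/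
open MeasureTheory Filter Topology

noncomputable section

namespace Stmt12Aux


lemma pi_norm_le'' {ι : Type*} [Fintype ι] {x : ι → ℝ} {r : ℝ} (hr : 0 ≤ r)
    (h : ∀ i, |x i| ≤ r) : ‖x‖ ≤ r := by
  refine (pi_norm_le_iff_of_nonneg hr).2 fun i => ?_
  simpa [Real.norm_eq_abs] using h i

lemma abs_le_pi_norm' {ι : Type*} [Fintype ι] (x : ι → ℝ) (i : ι) : |x i| ≤ ‖x‖ := by
  simpa [Real.norm_eq_abs] using norm_le_pi_norm x i

lemma exists_abs_eq_pi_norm {ι : Type*} [Fintype ι] [Nonempty ι] (x : ι → ℝ) :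
    ∃ i, ‖x‖ = |x i| := by
  obtain ⟨i, -, hi⟩ := Finset.exists_mem_eq_sup Finset.univ Finset.univ_nonempty
    (fun i => ‖x i‖₊)
  refine ⟨i, ?_⟩
  have h1 : ‖x‖₊ = ‖x i‖₊ := by rw [Pi.nnnorm_def]; exact hi
  have := congrArg (fun t : NNReal => (t : ℝ)) h1
  simpa [Real.norm_eq_abs] using this

lemma norm_comp_equiv {ι κ : Type*} [Fintype ι] [Fintype κ] (e : ι ≃ κ) (x : κ → ℝ) :
    ‖x ∘ e‖ = ‖x‖ := by
  apply le_antisymm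
  · exact pi_norm_le'' (norm_nonneg x) fun i => abs_le_pi_norm' x (e i)
  · refine pi_norm_le'' (norm_nonneg _) fun k => ?_
    have : x k = (x ∘ e) (e.symm k) := by simp
    rw [this]; exact abs_le_pi_norm' _ _

/-- `m` "disjoint blocks" of quality `t`, abstractly. -/
def SysP (X : Type*) [NormedAddCommGroup X] [NormedSpace ℝ X] (C : ℝ) (m : ℕ) (t : ℝ) : Prop :=
  ∃ T : (Fin m → ℝ) →ₗ[ℝ] X,
    (∀ a, ‖a‖ ≤ ‖T a‖ ∧ ‖T a‖ ≤ C * ‖a‖) ∧ ∀ k, t ≤ ‖T (Pi.single k 1)‖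

set_option maxHeartbeats 1000000 in
lemma james {X : Type*} [NormedAddCommGroup X] [NormedSpace ℝ X] (C : ℝ)
    (hcotype : ∀ n : ℕ, ∃ J : (Fin n → ℝ) →ₗ[ℝ] X,
      ∀ a : Fin n → ℝ, ‖a‖ ≤ ‖J a‖ ∧ ‖J a‖ ≤ C * ‖a‖)
    (M : ℕ) (ε : ℝ) (hε : 0 < ε) :
    ∃ T : (Fin M → ℝ) →ₗ[ℝ] X, ∀ a, ‖a‖ ≤ ‖T a‖ ∧ ‖T a‖ ≤ (1 + ε) * ‖a‖ := by
  rcases Nat.eq_zero_or_pos M with rfl | hM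
  · refine ⟨0, fun a => ?_⟩
    have h0 : ‖a‖ = 0 := by rw [Subsingleton.elim a 0, norm_zero]
    simp only [LinearMap.zero_apply, norm_zero, h0]
    constructor
    · exact le_rfl
    · positivity
  haveI : Nonempty (Fin M) := Fin.pos_iff_nonempty.1 hM
  set S : Set ℝ := {t | ∀ m, SysP X C m t} with hSdef
  have h1S : (1:ℝ) ∈ S := by
    intro m
    obtain ⟨J, hJ⟩ := hcotype m
    refine ⟨J, hJ, fun k => ?_⟩
    have := (hJ (Pi.single k 1)).1
    rwa [Pi.norm_single, norm_one] at this
  have hub : ∀ t ∈ S, t ≤ C := by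
    intro t ht
    obtain ⟨T, hT, hk⟩ := ht 1
    have h1 := hk 0
    have h2 := (hT (Pi.single 0 1)).2
    rw [Pi.norm_single, norm_one, mul_one] at h2
    linarith
  set γ := sSup S with hγdef
  clear_value γ
  have hbdd : BddAbove S := ⟨C, hub⟩
  have hγ1 : 1 ≤ γ := hγdef ▸ le_csSup hbdd h1S
  set δ := ε / (4 + 3 * ε) with hδdef
  clear_value δ
  have hδpos : 0 < δ := by rw [hδdef]; positivity
  have hδeq : δ * (4 + 3 * ε) = ε := by rw [hδdef]; exact div_mul_cancel₀ _ (by positivity)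
  have hδ3 : 3 * δ < 1 := by nlinarith
  have hγ3δ : 0 < γ - 3 * δ := by linarith
  have hkey : γ + δ ≤ (1 + ε) * (γ - 3 * δ) := by nlinarith
  -- a level at which blocks cannot all have quality `γ + δ`
  have hnot : ∃ m, ¬ SysP X C m (γ + δ) := by
    by_contra h
    push_neg at h
    have h2 : γ + δ ∈ S := h
    have := le_csSup hbdd h2
    rw [← hγdef] at this
    linarith
  obtain ⟨m, hm⟩ := hnot
  have hP : SysP X C (m * M) (γ - δ) := by
    obtain ⟨t, htS, htgt⟩ := exists_lt_of_lt_csSup (⟨1, h1S⟩ : S.Nonempty)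
      (show γ - δ < sSup S by rw [← hγdef]; linarith)
    obtain ⟨T, hT, hk⟩ := htS (m * M)
    exact ⟨T, hT, fun k => le_trans htgt.le (hk k)⟩
  obtain ⟨T₀, hT₀, hk₀⟩ := hP
  set e : Fin m × Fin M ≃ Fin (m * M) := finProdFinEquiv with hedef
  set R : (Fin m × Fin M → ℝ) →ₗ[ℝ] (Fin (m * M) → ℝ) := LinearMap.funLeft ℝ ℝ e.symm
    with hRdef
  have hR : ∀ x : Fin m × Fin M → ℝ, R x = x ∘ e.symm := fun _ => rfl
  clear_value R
  have hRnorm : ∀ x, ‖R x‖ = ‖x‖ := fun x => by rw [hR]; exact norm_comp_equiv e.symm x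
  set T₁ : (Fin m × Fin M → ℝ) →ₗ[ℝ] X := T₀ ∘ₗ R with hT₁def
  clear_value T₁
  have hT₁ : ∀ x, ‖x‖ ≤ ‖T₁ x‖ ∧ ‖T₁ x‖ ≤ C * ‖x‖ := by
    intro x
    rw [hT₁def]
    simp only [LinearMap.comp_apply]
    have h := hT₀ (R x)
    rw [hRnorm] at h
    exact h
  have hk₁ : ∀ p : Fin m × Fin M, γ - δ ≤ ‖T₁ (Pi.single p 1)‖ := by
    intro p
    have hsing : R (Pi.single p (1:ℝ)) = Pi.single (e p) 1 := by
      funext i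
      rw [hR]
      simp [Pi.single_apply, Equiv.symm_apply_eq]
    have : T₁ (Pi.single p 1) = T₀ (Pi.single (e p) 1) := by
      rw [hT₁def, LinearMap.comp_apply, hsing]
    rw [this]
    exact hk₀ (e p)
  -- grouping maps
  set G : Fin m → (Fin M → ℝ) →ₗ[ℝ] (Fin m × Fin M → ℝ) := fun j =>
    LinearMap.pi (fun p => if p.1 = j then LinearMap.proj p.2 else 0) with hGdef
  clear_value G
  have hG : ∀ j a p, G j a p = if p.1 = j then a p.2 else 0 := by
    intro j a p
    simp only [hGdef, LinearMap.pi_apply]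
    split <;> simp
  have hGnorm : ∀ j a, ‖G j a‖ = ‖a‖ := by
    intro j a
    apply le_antisymm
    · refine pi_norm_le'' (norm_nonneg a) fun p => ?_
      rw [hG]
      split
      · exact abs_le_pi_norm' a _
      · simpa using norm_nonneg a
    · refine pi_norm_le'' (norm_nonneg _) fun k => ?_
      have : a k = G j a (j, k) := by rw [hG]; simp
      rw [this]; exact abs_le_pi_norm' _ _
  have hGsingle : ∀ j k, G j (Pi.single k 1) = Pi.single ((j, k) : Fin m × Fin M) 1 := by
    intro j k
    funext p
    rw [hG]
    by_cases h1 : p.1 = j <;> by_cases h2 : p.2 = k <;>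
      simp [Pi.single_apply, Prod.ext_iff, h1, h2]
  -- some group has all combinations of quality `≤ γ + δ`
  have hex : ∃ j, ∀ a : Fin M → ℝ, ‖T₁ (G j a)‖ ≤ (γ + δ) * ‖a‖ := by
    by_contra hcon
    push_neg at hcon
    choose a ha using hcon
    have hane : ∀ j, a j ≠ 0 := by
      intro j hj
      have := ha j
      rw [hj] at this
      simp at this
    set u : Fin m → Fin M → ℝ := fun j => ‖a j‖⁻¹ • a j with hudef
    clear_value u
    have huapp : ∀ j, u j = ‖a j‖⁻¹ • a j := by intro j; rw [hudef]
    have hu1 : ∀ j, ‖u j‖ = 1 := by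
      intro j
      have h0 : ‖a j‖ ≠ 0 := norm_ne_zero_iff.2 (hane j)
      rw [huapp, norm_smul, norm_inv, norm_norm, inv_mul_cancel₀ h0]
    have hgood : ∀ j, γ + δ < ‖T₁ (G j (u j))‖ := by
      intro j
      have h0 : (0:ℝ) < ‖a j‖ := norm_pos_iff.2 (hane j)
      have h1 : G j (u j) = ‖a j‖⁻¹ • G j (a j) := by rw [huapp, _root_.map_smul]
      rw [h1, _root_.map_smul, norm_smul, norm_inv, norm_norm, inv_mul_eq_div, lt_div_iff₀ h0]
      exact ha j
    set Sm : (Fin m → ℝ) →ₗ[ℝ] (Fin m × Fin M → ℝ) :=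
      LinearMap.pi (fun p => u p.1 p.2 • LinearMap.proj p.1) with hSmdef
    clear_value Sm
    have hSm : ∀ b p, Sm b p = u p.1 p.2 * b p.1 := by
      intro b p
      simp [hSmdef, LinearMap.pi_apply]
    have hSmG : ∀ j, Sm (Pi.single j 1) = G j (u j) := by
      intro j
      funext p
      rw [hSm, hG, Pi.single_apply]
      by_cases h : p.1 = j <;> simp [h]
    have hSmnorm : ∀ b, ‖Sm b‖ = ‖b‖ := by
      intro b
      apply le_antisymm
      · refine pi_norm_le'' (norm_nonneg b) fun p => ?_
        rw [hSm, abs_mul]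
        calc |u p.1 p.2| * |b p.1| ≤ 1 * ‖b‖ := by
              refine mul_le_mul ?_ (abs_le_pi_norm' b p.1) (abs_nonneg _) zero_le_one
              calc |u p.1 p.2| ≤ ‖u p.1‖ := abs_le_pi_norm' _ _
                _ = 1 := hu1 p.1
          _ = ‖b‖ := one_mul _
      · refine pi_norm_le'' (norm_nonneg _) fun j => ?_
        have h1 : |b j| = ‖b j • u j‖ := by
          rw [norm_smul, hu1, mul_one, Real.norm_eq_abs]
        rw [h1]
        refine pi_norm_le'' (norm_nonneg _) fun k => ?_
        have hk : (b j • u j) k = Sm b (j, k) := by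
          rw [hSm]; simp [mul_comm]
        rw [hk]
        exact abs_le_pi_norm' _ _
    apply hm
    refine ⟨T₁ ∘ₗ Sm, fun b => ?_, fun j => ?_⟩
    · constructor
      · rw [LinearMap.comp_apply, ← hSmnorm b]
        exact (hT₁ (Sm b)).1
      · rw [LinearMap.comp_apply]
        calc ‖T₁ (Sm b)‖ ≤ C * ‖Sm b‖ := (hT₁ _).2
          _ = C * ‖b‖ := by rw [hSmnorm]
    · rw [LinearMap.comp_apply, hSmG]
      exact (hgood j).le
  obtain ⟨j, hj⟩ := hex
  set T' : (Fin M → ℝ) →ₗ[ℝ] X := T₁ ∘ₗ G j with hT'def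
  clear_value T'
  have hlow : ∀ a, ‖a‖ ≤ ‖T' a‖ := by
    intro a
    rw [hT'def, LinearMap.comp_apply, ← hGnorm j a]
    exact (hT₁ _).1
  have hup : ∀ a, ‖T' a‖ ≤ (γ + δ) * ‖a‖ := by
    intro a
    rw [hT'def, LinearMap.comp_apply]
    exact hj a
  have hsing : ∀ k, γ - δ ≤ ‖T' (Pi.single k 1)‖ := by
    intro k
    rw [hT'def, LinearMap.comp_apply, hGsingle]
    exact hk₁ (j, k)
  have hγδ0 : (0:ℝ) ≤ γ - δ := by linarith
  have himp : ∀ a, (γ - 3 * δ) * ‖a‖ ≤ ‖T' a‖ := by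
    intro a
    obtain ⟨k0, hk0⟩ := exists_abs_eq_pi_norm a
    set v : Fin M → ℝ := (2 * a k0) • (Pi.single k0 1 : Fin M → ℝ) - a with hvdef
    clear_value v
    have hco : ∀ k, |v k| = |a k| := by
      intro k
      rw [hvdef]
      simp only [Pi.sub_apply, Pi.smul_apply, smul_eq_mul]
      by_cases h : k = k0
      · subst h
        simp [Pi.single_apply]
        ring_nf
      · simp [Pi.single_apply, h]
    have hvnorm : ‖v‖ = ‖a‖ := by
      apply le_antisymm
      · exact pi_norm_le'' (norm_nonneg a) fun k => (hco k).le.trans (abs_le_pi_norm' a k)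
      · exact pi_norm_le'' (norm_nonneg v) fun k => ((hco k).symm.le).trans (abs_le_pi_norm' v k)
    have h2 : T' ((2 * a k0) • (Pi.single k0 1 : Fin M → ℝ)) = T' a + T' v := by
      rw [hvdef, map_sub]
      abel
    have h3 : 2 * ‖a‖ * (γ - δ) ≤ ‖T' ((2 * a k0) • (Pi.single k0 1 : Fin M → ℝ))‖ := by
      rw [_root_.map_smul, norm_smul, Real.norm_eq_abs, abs_mul]
      rw [show |(2:ℝ)| = 2 by norm_num]
      rw [← hk0]
      have := hsing k0
      nlinarith [norm_nonneg a, norm_nonneg (T' (Pi.single k0 1))]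
    have h4 : ‖T' a + T' v‖ ≤ ‖T' a‖ + (γ + δ) * ‖a‖ := by
      calc ‖T' a + T' v‖ ≤ ‖T' a‖ + ‖T' v‖ := norm_add_le _ _
        _ ≤ ‖T' a‖ + (γ + δ) * ‖v‖ := by linarith [hup v]
        _ = ‖T' a‖ + (γ + δ) * ‖a‖ := by rw [hvnorm]
    rw [h2] at h3
    linarith
  refine ⟨(γ - 3 * δ)⁻¹ • T', fun a => ?_⟩
  have hTa : ‖((γ - 3 * δ)⁻¹ • T') a‖ = (γ - 3 * δ)⁻¹ * ‖T' a‖ := by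
    rw [LinearMap.smul_apply, norm_smul, Real.norm_eq_abs, abs_of_pos (inv_pos.2 hγ3δ)]
  constructor
  · rw [hTa]
    calc ‖a‖ = (γ - 3 * δ)⁻¹ * ((γ - 3 * δ) * ‖a‖) := by field_simp
      _ ≤ (γ - 3 * δ)⁻¹ * ‖T' a‖ :=
        mul_le_mul_of_nonneg_left (himp a) (inv_pos.2 hγ3δ).le
  · rw [hTa]
    have h5 : ‖T' a‖ ≤ (γ - 3 * δ) * ((1 + ε) * ‖a‖) := by
      calc ‖T' a‖ ≤ (γ + δ) * ‖a‖ := hup a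
        _ ≤ ((1 + ε) * (γ - 3 * δ)) * ‖a‖ := mul_le_mul_of_nonneg_right hkey (norm_nonneg a)
        _ = (γ - 3 * δ) * ((1 + ε) * ‖a‖) := by ring
    calc (γ - 3 * δ)⁻¹ * ‖T' a‖ ≤ (γ - 3 * δ)⁻¹ * ((γ - 3 * δ) * ((1 + ε) * ‖a‖)) :=
          mul_le_mul_of_nonneg_left h5 (inv_pos.2 hγ3δ).le
      _ = (1 + ε) * ‖a‖ := by field_simp


set_option maxHeartbeats 1000000 in
lemma stepB {X : Type*} [NormedAddCommGroup X] [NormedSpace ℝ X]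
    (C : ℝ)
    (hcotype : ∀ n : ℕ, ∃ J : (Fin n → ℝ) →ₗ[ℝ] X,
      ∀ a : Fin n → ℝ, ‖a‖ ≤ ‖J a‖ ∧ ‖J a‖ ≤ C * ‖a‖)
    (Z : Submodule ℝ X) (hZc : IsClosed (Z : Set X))
    (hZcodim : FiniteDimensional ℝ (X ⧸ Z))
    (n : ℕ) (ε : ℝ) (hε : 0 < ε) (hε1 : ε ≤ 1) :
    ∃ J : (Fin n → ℝ) →ₗ[ℝ] X, (∀ a, J a ∈ Z) ∧
      ∀ a : Fin n → ℝ, ‖a‖ ≤ ‖J a‖ ∧ ‖J a‖ ≤ (1 + ε) * ‖a‖ := by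
  classical
  haveI : IsClosed (Z : Set X) := hZc
  haveI := hZcodim
  rcases Nat.eq_zero_or_pos n with rfl | hn
  · refine ⟨0, fun a => Z.zero_mem, fun a => ?_⟩
    have h0 : ‖a‖ = 0 := by rw [Subsingleton.elim a 0, norm_zero]
    simp only [LinearMap.zero_apply, norm_zero, h0]
    exact ⟨le_rfl, by positivity⟩
  -- small parameter
  set δ := ε / (6 * (n + 1) * (2 + ε)) with hδdef
  clear_value δ
  have hδpos : 0 < δ := by rw [hδdef]; positivity
  have hδeq : δ * (6 * ((n:ℝ) + 1) * (2 + ε)) = ε := by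
    rw [hδdef]; push_cast; exact div_mul_cancel₀ _ (by positivity)
  have hnn : (1:ℝ) ≤ n := by exact_mod_cast hn
  have hd1 : 3 * (n:ℝ) * δ * (2 * (2 + ε)) ≤ ε := by nlinarith [hδpos.le, hε.le]
  have hs : 0 < 1 - 3 * (n:ℝ) * δ := by nlinarith [hδpos.le, hε.le]
  have hkey : 1 + ε/4 + 3*(n:ℝ)*δ ≤ (1 + ε) * (1 - 3*(n:ℝ)*δ) := by nlinarith [hδpos.le, hε.le]
  -- finite net in the quotient
  have hcomp : IsCompact (Metric.closedBall (0 : X ⧸ Z) 2) := isCompact_closedBall 0 2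
  obtain ⟨t, htfin, hcover⟩ := (Metric.totallyBounded_iff.1 hcomp.totallyBounded) δ hδpos
  set M : ℕ := htfin.toFinset.card * (2 * n) + 1 with hMdef
  obtain ⟨T, hT⟩ := james C hcotype M (ε/4) (by positivity)
  have hq : ∀ x : X, ‖Submodule.Quotient.mk (p := Z) x‖ ≤ ‖x‖ := fun x =>
    Submodule.Quotient.norm_mk_le Z x
  have hmem : ∀ i : Fin M, (Submodule.Quotient.mk (T (Pi.single i 1)) : X ⧸ Z)
      ∈ Metric.closedBall (0 : X ⧸ Z) 2 := by
    intro i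
    rw [Metric.mem_closedBall, dist_zero_right]
    calc ‖(Submodule.Quotient.mk (T (Pi.single i 1)) : X ⧸ Z)‖ ≤ ‖T (Pi.single i 1)‖ := hq _
      _ ≤ (1 + ε/4) * ‖(Pi.single i 1 : Fin M → ℝ)‖ := (hT _).2
      _ ≤ 2 := by rw [Pi.norm_single, norm_one, mul_one]; linarith
  have hchoice : ∀ i : Fin M, ∃ c ∈ t,
      (Submodule.Quotient.mk (T (Pi.single i 1)) : X ⧸ Z) ∈ Metric.ball c δ := by
    intro i
    have := hcover (hmem i)
    simpa using this
  choose g hgt hgball using hchoice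
  have hmapsto : ∀ i ∈ (Finset.univ : Finset (Fin M)), g i ∈ htfin.toFinset :=
    fun i _ => htfin.mem_toFinset.2 (hgt i)
  have hcard : htfin.toFinset.card * (2 * n) < (Finset.univ : Finset (Fin M)).card := by
    rw [Finset.card_univ, Fintype.card_fin, hMdef]
    omega
  obtain ⟨c, -, hcfib⟩ := Finset.exists_lt_card_fiber_of_mul_lt_card_of_maps_to hmapsto hcard
  have hFcard : n + n ≤ (Finset.univ.filter (fun i => g i = c)).card := by omega
  obtain ⟨F', hF'sub, hF'card⟩ := Finset.exists_subset_card_eq hFcard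
  set em := F'.orderEmbOfFin hF'card with hemdef
  have hembmem : ∀ l, g (em l) = c := by
    intro l
    have h1 : em l ∈ Finset.univ.filter (fun i => g i = c) :=
      hF'sub (F'.orderEmbOfFin_mem hF'card l)
    exact (Finset.mem_filter.1 h1).2
  have hinj : Function.Injective em := em.injective
  -- the sign-difference map D : ℝⁿ → ℝ^(n+n)
  set D : (Fin n → ℝ) →ₗ[ℝ] (Fin (n + n) → ℝ) :=
    LinearMap.pi (fun l => Fin.addCases (fun k => LinearMap.proj k)
      (fun k => -LinearMap.proj k) l) with hDdef
  clear_value D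
  have hD1 : ∀ (a : Fin n → ℝ) (k : Fin n), D a (Fin.castAdd n k) = a k := by
    intro a k
    rw [hDdef]
    simp only [LinearMap.pi_apply]
    rw [Fin.addCases_left]
    rfl
  have hD2 : ∀ (a : Fin n → ℝ) (k : Fin n), D a (Fin.natAdd n k) = -a k := by
    intro a k
    rw [hDdef]
    simp only [LinearMap.pi_apply]
    rw [Fin.addCases_right]
    rfl
  have hne : ∀ (k1 k2 : Fin n), Fin.castAdd n k1 ≠ Fin.natAdd n k2 := by
    intro k1 k2 h
    have := congrArg Fin.val h
    rw [Fin.coe_castAdd, Fin.coe_natAdd] at this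
    omega
  have hnatinj : ∀ (k1 k2 : Fin n), Fin.natAdd n k1 = Fin.natAdd n k2 → k1 = k2 := by
    intro k1 k2 h
    have := congrArg Fin.val h
    rw [Fin.coe_natAdd, Fin.coe_natAdd] at this
    exact Fin.ext (by omega)
  have hDnorm : ∀ a, ‖D a‖ = ‖a‖ := by
    intro a
    apply le_antisymm
    · refine pi_norm_le'' (norm_nonneg a) fun l => ?_
      refine Fin.addCases (fun k => ?_) (fun k => ?_) l
      · rw [hD1]; exact abs_le_pi_norm' a k
      · rw [hD2, abs_neg]; exact abs_le_pi_norm' a k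
    · refine pi_norm_le'' (norm_nonneg _) fun k => ?_
      rw [show a k = D a (Fin.castAdd n k) from (hD1 a k).symm]
      exact abs_le_pi_norm' _ _
  have hDsingle : ∀ k : Fin n, D (Pi.single k 1) =
      (Pi.single (Fin.castAdd n k) 1 : Fin (n+n) → ℝ) - Pi.single (Fin.natAdd n k) 1 := by
    intro k
    funext l
    refine Fin.addCases (fun k' => ?_) (fun k' => ?_) l
    · rw [Pi.sub_apply, hD1]
      have h2 : (Pi.single (Fin.natAdd n k) (1:ℝ) : Fin (n+n) → ℝ) (Fin.castAdd n k') = 0 := by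
        rw [Pi.single_apply, if_neg (hne k' k)]
      have h3 : (Pi.single (Fin.castAdd n k) (1:ℝ) : Fin (n+n) → ℝ) (Fin.castAdd n k') =
          (Pi.single k (1:ℝ) : Fin n → ℝ) k' := by
        rw [Pi.single_apply, Pi.single_apply]
        by_cases hkk : k' = k
        · rw [if_pos (by rw [hkk]), if_pos hkk]
        · rw [if_neg (fun hc => hkk (Fin.castAdd_injective _ _ hc)), if_neg hkk]
      rw [h2, h3, sub_zero]
    · rw [Pi.sub_apply, hD2]
      have h2 : (Pi.single (Fin.castAdd n k) (1:ℝ) : Fin (n+n) → ℝ) (Fin.natAdd n k') = 0 := by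
        rw [Pi.single_apply, if_neg (fun hc => hne k k' hc.symm)]
      have h3 : (Pi.single (Fin.natAdd n k) (1:ℝ) : Fin (n+n) → ℝ) (Fin.natAdd n k') =
          (Pi.single k (1:ℝ) : Fin n → ℝ) k' := by
        rw [Pi.single_apply, Pi.single_apply]
        by_cases hkk : k' = k
        · rw [if_pos (by rw [hkk]), if_pos hkk]
        · rw [if_neg (fun hc => hkk (hnatinj _ _ hc)), if_neg hkk]
      rw [h2, h3, zero_sub]
  -- extension by zero along the embedding
  set E : (Fin (n + n) → ℝ) →ₗ[ℝ] (Fin M → ℝ) :=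
    Function.ExtendByZero.linearMap ℝ em with hEdef
  clear_value E
  have hEapp : ∀ x l, E x (em l) = x l := by
    intro x l
    rw [hEdef]
    simp only [Function.ExtendByZero.linearMap_apply]
    exact hinj.extend_apply x 0 l
  have hEout : ∀ x jj, (¬∃ l, em l = jj) → E x jj = 0 := by
    intro x jj h
    rw [hEdef]
    simp only [Function.ExtendByZero.linearMap_apply]
    rw [Function.extend_apply' _ _ _ h]
    rfl
  have hEnorm : ∀ x, ‖E x‖ = ‖x‖ := by
    intro x
    apply le_antisymm
    · refine pi_norm_le'' (norm_nonneg x) fun jj => ?_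
      by_cases h : ∃ l, em l = jj
      · obtain ⟨l, rfl⟩ := h
        rw [hEapp]; exact abs_le_pi_norm' x l
      · rw [hEout x jj h]; simpa using norm_nonneg x
    · refine pi_norm_le'' (norm_nonneg _) fun l => ?_
      rw [show x l = E x (em l) from (hEapp x l).symm]
      exact abs_le_pi_norm' _ _
  have hEsingle : ∀ l : Fin (n+n), E (Pi.single l 1) = Pi.single (em l) 1 := by
    intro l
    funext jj
    by_cases h : ∃ l', em l' = jj
    · obtain ⟨l', rfl⟩ := h
      rw [hEapp, Pi.single_apply, Pi.single_apply]
      have : (em l' = em l) ↔ (l' = l) := ⟨fun h => hinj h, fun h => by rw [h]⟩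
      simp [this]
    · rw [hEout _ jj h, Pi.single_apply, if_neg]
      intro hc
      exact h ⟨l, hc.symm⟩
  set V : (Fin n → ℝ) →ₗ[ℝ] (Fin M → ℝ) := E ∘ₗ D with hVdef
  clear_value V
  have hVapp : ∀ a, V a = E (D a) := by intro a; rw [hVdef]; rfl
  have hVnorm : ∀ a, ‖V a‖ = ‖a‖ := by intro a; rw [hVapp, hEnorm, hDnorm]
  have hVsingle : ∀ k : Fin n, V (Pi.single k 1) =
      (Pi.single (em (Fin.castAdd n k)) 1 : Fin M → ℝ) - Pi.single (em (Fin.natAdd n k)) 1 := by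
    intro k
    rw [hVapp, hDsingle, map_sub, hEsingle, hEsingle]
  -- the approximating vectors and their corrections in Z
  set w : Fin n → X := fun k => T (V (Pi.single k 1)) with hwdef
  clear_value w
  have hwapp : ∀ k, w k = T (V (Pi.single k 1)) := by intro k; rw [hwdef]
  have hqw : ∀ k : Fin n, ‖(Submodule.Quotient.mk (w k) : X ⧸ Z)‖ < 2 * δ := by
    intro k
    rw [hwapp, hVsingle, map_sub T, Submodule.Quotient.mk_sub]
    have h1 := hgball (em (Fin.castAdd n k))
    have h2 := hgball (em (Fin.natAdd n k))
    rw [hembmem] at h1 h2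
    rw [Metric.mem_ball] at h1 h2
    have : ‖(Submodule.Quotient.mk (T (Pi.single (em (Fin.castAdd n k)) 1)) : X ⧸ Z) -
        Submodule.Quotient.mk (T (Pi.single (em (Fin.natAdd n k)) 1))‖ =
        dist (Submodule.Quotient.mk (T (Pi.single (em (Fin.castAdd n k)) 1)) : X ⧸ Z)
          (Submodule.Quotient.mk (T (Pi.single (em (Fin.natAdd n k)) 1))) := by
      rw [dist_eq_norm]
    rw [this]
    calc dist (Submodule.Quotient.mk (T (Pi.single (em (Fin.castAdd n k)) 1)) : X ⧸ Z)
          (Submodule.Quotient.mk (T (Pi.single (em (Fin.natAdd n k)) 1)))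
        ≤ dist (Submodule.Quotient.mk (T (Pi.single (em (Fin.castAdd n k)) 1)) : X ⧸ Z) c +
          dist c (Submodule.Quotient.mk (T (Pi.single (em (Fin.natAdd n k)) 1)) : X ⧸ Z) :=
          dist_triangle _ _ _
      _ < δ + δ := by rw [dist_comm c]; exact add_lt_add h1 h2
      _ = 2 * δ := by ring
  have hz : ∀ k : Fin n, ∃ z, z ∈ Z ∧ ‖w k - z‖ < 3 * δ := by
    intro k
    obtain ⟨x0, hx0, hx0n⟩ :=
      Submodule.Quotient.norm_mk_lt (Submodule.Quotient.mk (w k) : X ⧸ Z) hδpos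
    refine ⟨w k - x0, ?_, ?_⟩
    · have h1 : x0 - w k ∈ Z := (Submodule.Quotient.eq Z).1 hx0
      have := Z.neg_mem h1
      rwa [neg_sub] at this
    · rw [sub_sub_cancel]
      calc ‖x0‖ < ‖(Submodule.Quotient.mk (w k) : X ⧸ Z)‖ + δ := hx0n
        _ < 2 * δ + δ := by linarith [hqw k]
        _ = 3 * δ := by ring
  choose z hzZ hzn using hz
  -- the final map
  set J₀ : (Fin n → ℝ) →ₗ[ℝ] X :=
    ∑ k, LinearMap.smulRight (LinearMap.proj k : (Fin n → ℝ) →ₗ[ℝ] ℝ) (z k) with hJ₀def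
  clear_value J₀
  have hJ₀ : ∀ a, J₀ a = ∑ k, a k • z k := by
    intro a
    rw [hJ₀def]
    simp [LinearMap.sum_apply, LinearMap.smulRight_apply, LinearMap.proj_apply]
  have hrep : ∀ a : Fin n → ℝ, a = ∑ k, a k • (Pi.single k 1 : Fin n → ℝ) := by
    intro a
    have h2 : ∀ k : Fin n, a k • (Pi.single k 1 : Fin n → ℝ) = Pi.single k (a k) := by
      intro k
      rw [← Pi.single_smul, smul_eq_mul, mul_one]
    calc a = ∑ k, (Pi.single k (a k) : Fin n → ℝ) := (Finset.univ_sum_single a).symm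
      _ = ∑ k, a k • (Pi.single k 1 : Fin n → ℝ) :=
          Finset.sum_congr rfl fun k _ => (h2 k).symm
  have hTVa : ∀ a : Fin n → ℝ, T (V a) = ∑ k, a k • w k := by
    intro a
    conv_lhs => rw [hrep a]
    rw [map_sum, map_sum]
    refine Finset.sum_congr rfl fun k _ => ?_
    rw [_root_.map_smul, _root_.map_smul, hwapp]
  have hdiff : ∀ a : Fin n → ℝ, ‖J₀ a - T (V a)‖ ≤ (3 * n * δ) * ‖a‖ := by
    intro a
    rw [hJ₀, hTVa, ← Finset.sum_sub_distrib]
    calc ‖∑ k, (a k • z k - a k • w k)‖ ≤ ∑ k, ‖a k • z k - a k • w k‖ :=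
          norm_sum_le _ _
      _ ≤ ∑ _k : Fin n, ‖a‖ * (3 * δ) := by
          refine Finset.sum_le_sum fun k _ => ?_
          rw [← smul_sub, norm_smul, Real.norm_eq_abs]
          refine mul_le_mul (abs_le_pi_norm' a k) ?_ (norm_nonneg _) (norm_nonneg a)
          rw [norm_sub_rev]
          exact (hzn k).le
      _ = n * (‖a‖ * (3 * δ)) := by
          rw [Finset.sum_const, Finset.card_univ, Fintype.card_fin, nsmul_eq_mul]
      _ = (3 * n * δ) * ‖a‖ := by ring
  have hlow0 : ∀ a : Fin n → ℝ, (1 - 3 * n * δ) * ‖a‖ ≤ ‖J₀ a‖ := by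
    intro a
    have h1 : ‖a‖ ≤ ‖T (V a)‖ := by
      have := (hT (V a)).1
      rwa [hVnorm] at this
    have h2 := hdiff a
    have h3 : ‖T (V a)‖ - ‖J₀ a‖ ≤ ‖J₀ a - T (V a)‖ := by
      rw [norm_sub_rev]
      exact norm_sub_norm_le _ _
    linarith
  have hup0 : ∀ a : Fin n → ℝ, ‖J₀ a‖ ≤ (1 + ε/4 + 3 * n * δ) * ‖a‖ := by
    intro a
    have h1 : ‖T (V a)‖ ≤ (1 + ε/4) * ‖a‖ := by
      have := (hT (V a)).2
      rwa [hVnorm] at this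
    have h2 := hdiff a
    have h3 : ‖J₀ a‖ - ‖T (V a)‖ ≤ ‖J₀ a - T (V a)‖ := norm_sub_norm_le _ _
    nlinarith [norm_nonneg a]
  refine ⟨(1 - 3 * (n:ℝ) * δ)⁻¹ • J₀, fun a => ?_, fun a => ?_⟩
  · refine Z.smul_mem _ ?_
    rw [hJ₀]
    exact Submodule.sum_mem Z fun k _ => Z.smul_mem _ (hzZ k)
  · have hTa : ‖((1 - 3 * (n:ℝ) * δ)⁻¹ • J₀) a‖ = (1 - 3 * (n:ℝ) * δ)⁻¹ * ‖J₀ a‖ := by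
      rw [LinearMap.smul_apply, norm_smul, Real.norm_eq_abs, abs_of_pos (inv_pos.2 hs)]
    constructor
    · rw [hTa]
      calc ‖a‖ = (1 - 3 * (n:ℝ) * δ)⁻¹ * ((1 - 3 * (n:ℝ) * δ) * ‖a‖) := by field_simp
        _ ≤ (1 - 3 * (n:ℝ) * δ)⁻¹ * ‖J₀ a‖ :=
            mul_le_mul_of_nonneg_left (hlow0 a) (inv_pos.2 hs).le
    · rw [hTa]
      have h5 : ‖J₀ a‖ ≤ (1 - 3 * (n:ℝ) * δ) * ((1 + ε) * ‖a‖) := by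
        calc ‖J₀ a‖ ≤ (1 + ε/4 + 3 * n * δ) * ‖a‖ := hup0 a
          _ ≤ ((1 + ε) * (1 - 3 * (n:ℝ) * δ)) * ‖a‖ :=
              mul_le_mul_of_nonneg_right hkey (norm_nonneg a)
          _ = (1 - 3 * (n:ℝ) * δ) * ((1 + ε) * ‖a‖) := by ring
      calc (1 - 3 * (n:ℝ) * δ)⁻¹ * ‖J₀ a‖
          ≤ (1 - 3 * (n:ℝ) * δ)⁻¹ * ((1 - 3 * (n:ℝ) * δ) * ((1 + ε) * ‖a‖)) :=
            mul_le_mul_of_nonneg_left h5 (inv_pos.2 hs).le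
        _ = (1 + ε) * ‖a‖ := by field_simp


end Stmt12Aux

/-- If `X` contains `ℓ∞ⁿ` uniformly, then every closed finite-codimensional subspace `Z`
of `X` contains, for every `n` and `ε > 0`, a `(1+ε)`-isomorphic copy of `ℓ∞ⁿ`. -/
theorem stmt12 {X : Type*} [NormedAddCommGroup X] [NormedSpace ℝ X] [CompleteSpace X]
    (C : ℝ)
    (hcotype : ∀ n : ℕ, ∃ J : (Fin n → ℝ) →ₗ[ℝ] X,
      ∀ a : Fin n → ℝ, ‖a‖ ≤ ‖J a‖ ∧ ‖J a‖ ≤ C * ‖a‖)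
    (Z : Submodule ℝ X) (hZc : IsClosed (Z : Set X))
    (hZcodim : FiniteDimensional ℝ (X ⧸ Z))
    (n : ℕ) (ε : ℝ) (hε : 0 < ε) :
    ∃ J : (Fin n → ℝ) →ₗ[ℝ] X, (∀ a, J a ∈ Z) ∧
      ∀ a : Fin n → ℝ, ‖a‖ ≤ ‖J a‖ ∧ ‖J a‖ ≤ (1 + ε) * ‖a‖ := by
  rcases le_or_gt ε 1 with h1 | h1
  · exact Stmt12Aux.stepB C hcotype Z hZc hZcodim n ε hε h1
  · obtain ⟨J, hJZ, hJ⟩ := Stmt12Aux.stepB C hcotype Z hZc hZcodim n 1 one_pos le_rfl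
    refine ⟨J, hJZ, fun a => ⟨(hJ a).1, (hJ a).2.trans ?_⟩⟩
    nlinarith [norm_nonneg a]
end
end

section
/- Let B be a Lebesgue-measurable subset of [0,1] and let g_1,…,g_n ∈ L¹[0,1]. Then there exists a measurable subset B₁ of B such that μ(B₁) = μ(B)/2 and ∫_{B₁} g_i dμ = (1/2) ∫_{B} g_i dμ for every i = 1,…,n. -/
/-!
Induction on the number of functions. The measure alone is halved by cutting `B` at a point `t`:
`t ↦ μ (B ∩ Iic t)` is continuous because `μ` has no atoms. If every measurable set can be halved
for `μ` and `g₁, …, gₙ`, iterating the halving and passing to the limit along dyadic fractions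
gives an increasing chain `C t ⊆ B`, `t ∈ [0, 1]`, from `∅` to `B` along which `μ` and every
`∫ gᵢ` grow linearly in `t`. Hence every window `C (t + 1/2) \ C t` halves them, and
`t ↦ ∫_{C (t + 1/2) \ C t} gₙ₊₁` is continuous with values at `t = 0` and `t = 1/2` adding up
to `∫_B gₙ₊₁`; the intermediate value theorem yields a window halving `gₙ₊₁` too.
-/

open MeasureTheory Filter Topology

noncomputable section

open Set

section Bisection

variable {α : Type*} [MeasurableSpace α] {μ : Measure α}

structure IsBisection {ι : Type*} (μ : Measure α) (f : ι → α → ℝ) (B A : Set α) : Prop where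
  measurableSet : MeasurableSet A
  subset : A ⊆ B
  measure_eq : μ A = μ B / 2
  setIntegral_eq : ∀ i, ∫ x in A, f i x ∂μ = 1 / 2 * ∫ x in B, f i x ∂μ

lemma measure_eq_div_two_iff [IsFiniteMeasure μ] {s t : Set α} :
    μ s = μ t / 2 ↔ μ.real s = μ.real t / 2 := by
  rw [measureReal_def, measureReal_def, ← ENNReal.toReal_ofNat 2, ← ENNReal.toReal_div,
    ENNReal.toReal_eq_toReal_iff' (measure_ne_top μ s)
      (ENNReal.div_ne_top (measure_ne_top μ t) two_ne_zero)]

lemma setIntegral_one_eq_half [IsFiniteMeasure μ] {s t : Set α} (h : μ s = μ t / 2) :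
    ∫ _ in s, (1 : ℝ) ∂μ = 1 / 2 * ∫ _ in t, (1 : ℝ) ∂μ := by
  rw [setIntegral_one_eq_measureReal, setIntegral_one_eq_measureReal, measure_eq_div_two_iff.1 h]
  ring

lemma continuousWithinAt_setIntegral {β E : Type*} [TopologicalSpace β] [NormedAddCommGroup E]
    [NormedSpace ℝ E] {f : α → E} (hf : Integrable f μ) {A : β → Set α}
    (hA : ∀ x, MeasurableSet (A x)) {s : Set β} {b : β}
    (h₁ : Tendsto (fun x => μ (A x \ A b)) (𝓝[s] b) (𝓝 0))
    (h₂ : Tendsto (fun x => μ (A b \ A x)) (𝓝[s] b) (𝓝 0)) :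
    ContinuousWithinAt (fun x => ∫ y in A x, f y ∂μ) s b := by
  have hsplit : ∀ x, ∫ y in A x, f y ∂μ =
      ∫ y in A b, f y ∂μ + (∫ y in A x \ A b, f y ∂μ - ∫ y in A b \ A x, f y ∂μ) := fun x => by
    rw [← integral_inter_add_sdiff (hA b) (hf.integrableOn (s := A x)),
      ← integral_inter_add_sdiff (hA x) (hf.integrableOn (s := A b)), inter_comm]
    abel
  have hlim := (tendsto_const_nhds (x := ∫ y in A b, f y ∂μ)).add
    ((hf.tendsto_setIntegral_nhds_zero h₁).sub (hf.tendsto_setIntegral_nhds_zero h₂))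
  rw [sub_zero, add_zero] at hlim
  exact hlim.congr fun x => (hsplit x).symm

end Bisection

section Real

variable (μ : Measure ℝ) [IsFiniteMeasure μ] [NullSingletonClass μ]

lemma continuous_measureReal_inter_Iic {B : Set ℝ} (hB : MeasurableSet B) :
    Continuous fun t => μ.real (B ∩ Iic t) := by
  refine continuous_iff_continuousAt.2 fun a => ?_
  have hδ : Tendsto (fun x => μ (Icc (a - |x - a|) (a + |x - a|))) (𝓝[univ] a) (𝓝 0) := by
    refine (tendsto_measure_Icc μ a).comp ?_
    simpa [nhdsWithin_univ] using (continuous_sub_right a).abs.tendsto a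
  have hsub : ∀ x, (B ∩ Iic x) \ (B ∩ Iic a) ∪ (B ∩ Iic a) \ (B ∩ Iic x) ⊆
      Icc (a - |x - a|) (a + |x - a|) := by
    rintro x y (⟨⟨hyB, hyx : y ≤ x⟩, hya⟩ | ⟨⟨hyB, hya : y ≤ a⟩, hyx⟩)
    · have : a < y := lt_of_not_ge fun h => hya ⟨hyB, h⟩
      constructor <;> linarith [le_abs_self (x - a), neg_abs_le (x - a)]
    · have : x < y := lt_of_not_ge fun h => hyx ⟨hyB, h⟩
      constructor <;> linarith [le_abs_self (x - a), neg_abs_le (x - a)]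
  have hle : ∀ s : ℝ → Set ℝ, (∀ x, s x ⊆ Icc (a - |x - a|) (a + |x - a|)) →
      Tendsto (fun x => μ (s x)) (𝓝[univ] a) (𝓝 0) := fun s hs =>
    tendsto_of_tendsto_of_tendsto_of_le_of_le tendsto_const_nhds hδ (fun _ => zero_le)
      fun x => measure_mono (hs x)
  have := continuousWithinAt_setIntegral (integrable_const (1 : ℝ))
    (fun x => hB.inter measurableSet_Iic)
    (hle _ fun x => subset_union_left.trans (hsub x))
    (hle _ fun x => subset_union_right.trans (hsub x))
  simpa only [continuousWithinAt_univ, setIntegral_one_eq_measureReal] using this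

lemma exists_subset_measure_eq_half {B : Set ℝ} (hB : MeasurableSet B) :
    ∃ A, MeasurableSet A ∧ A ⊆ B ∧ μ A = μ B / 2 := by
  rcases eq_or_ne (μ B) 0 with h0 | h0
  · exact ⟨∅, .empty, empty_subset B, by simp [h0]⟩
  set F : ℝ → ENNReal := fun t => μ (B ∩ Iic t)
  have hF : Continuous F := by
    refine (ENNReal.continuous_ofReal.comp (continuous_measureReal_inter_Iic μ hB)).congr
      fun t => ofReal_measureReal (measure_ne_top μ _)
  have hbot : Tendsto F atBot (𝓝 0) := by
    have := tendsto_measure_iInter_atBot (μ := μ)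
      (fun t => (hB.inter measurableSet_Iic).nullMeasurableSet)
      (fun s t hst => inter_subset_inter_right B (Iic_subset_Iic.2 hst)) ⟨0, measure_ne_top μ _⟩
    rwa [← inter_iInter, iInter_Iic_eq_empty_iff.2 (by simp [not_bddBelow_univ]), inter_empty,
      measure_empty] at this
  have htop : Tendsto F atTop (𝓝 (μ B)) := by
    have := tendsto_measure_iUnion_atTop (μ := μ)
      (fun s t hst => inter_subset_inter_right B (Iic_subset_Iic.2 hst))
    rwa [← inter_iUnion, iUnion_Iic, inter_univ] at this
  obtain ⟨t, ht⟩ := mem_range_of_exists_le_of_exists_ge hF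
    ((hbot.eventually_lt_const (ENNReal.half_pos h0)).exists.imp fun _ => le_of_lt)
    ((htop.eventually_const_lt (ENNReal.half_lt_self h0 (measure_ne_top μ B))).exists.imp
      fun _ => le_of_lt)
  exact ⟨B ∩ Iic t, hB.inter measurableSet_Iic, inter_subset_left, ht⟩

end Real

section Dyadic

variable {α : Type*} {halve : Set α → Set α} {B : Set α}

/-- `dyadicLevel halve B j k` is the union of the first `k` of the `2 ^ j` pieces into which `j`
rounds of `halve` cut `B`. -/
def dyadicLevel (halve : Set α → Set α) (B : Set α) : ℕ → ℕ → Set α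
  | 0, k => if k = 0 then ∅ else B
  | j + 1, k =>
    if Even k then dyadicLevel halve B j (k / 2)
    else dyadicLevel halve B j (k / 2) ∪
      halve (dyadicLevel halve B j (k / 2 + 1) \ dyadicLevel halve B j (k / 2))

@[simp]
lemma dyadicLevel_succ_two_mul (j k : ℕ) :
    dyadicLevel halve B (j + 1) (2 * k) = dyadicLevel halve B j k := by
  simp [dyadicLevel]

lemma dyadicLevel_succ_two_mul_add_one (j k : ℕ) :
    dyadicLevel halve B (j + 1) (2 * k + 1) = dyadicLevel halve B j k ∪
      halve (dyadicLevel halve B j (k + 1) \ dyadicLevel halve B j k) := by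
  have hk : (2 * k + 1) / 2 = k := by omega
  simp [dyadicLevel, hk]

@[simp]
lemma dyadicLevel_zero_right (j : ℕ) : dyadicLevel halve B j 0 = ∅ := by
  induction j with
  | zero => simp [dyadicLevel]
  | succ j ih => rw [← mul_zero 2, dyadicLevel_succ_two_mul, ih]

@[simp]
lemma dyadicLevel_two_pow (j : ℕ) : dyadicLevel halve B j (2 ^ j) = B := by
  induction j with
  | zero => simp [dyadicLevel]
  | succ j ih => rw [pow_succ', dyadicLevel_succ_two_mul, ih]

lemma dyadicLevel_subset (hsub : ∀ s, halve s ⊆ s) (j k : ℕ) : dyadicLevel halve B j k ⊆ B := by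
  induction j generalizing k with
  | zero => unfold dyadicLevel; split_ifs <;> simp
  | succ j ih =>
    obtain ⟨m, rfl | rfl⟩ := Nat.even_or_odd' k
    · rw [dyadicLevel_succ_two_mul]; exact ih m
    · rw [dyadicLevel_succ_two_mul_add_one]
      exact union_subset (ih m) ((hsub _).trans (sdiff_subset.trans (ih _)))

lemma dyadicLevel_subset_succ (hsub : ∀ s, halve s ⊆ s) (j k : ℕ) :
    dyadicLevel halve B j k ⊆ dyadicLevel halve B j (k + 1) := by
  induction j generalizing k with
  | zero => by_cases hk : k = 0 <;> simp [dyadicLevel, hk]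
  | succ j ih =>
    obtain ⟨m, rfl | rfl⟩ := Nat.even_or_odd' k
    · rw [dyadicLevel_succ_two_mul, dyadicLevel_succ_two_mul_add_one]
      exact subset_union_left
    · rw [show 2 * m + 1 + 1 = 2 * (m + 1) by ring, dyadicLevel_succ_two_mul,
        dyadicLevel_succ_two_mul_add_one]
      exact union_subset (ih m) ((hsub _).trans sdiff_subset)

lemma monotone_dyadicLevel (hsub : ∀ s, halve s ⊆ s) (j : ℕ) :
    Monotone (dyadicLevel halve B j) :=
  monotone_nat_of_le_succ (dyadicLevel_subset_succ hsub j)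

def dyadicChain (halve : Set α → Set α) (B : Set α) (t : ℝ) : Set α :=
  ⋃ j, dyadicLevel halve B j ⌊t * 2 ^ j⌋₊

lemma dyadicChain_subset (hsub : ∀ s, halve s ⊆ s) (t : ℝ) : dyadicChain halve B t ⊆ B :=
  iUnion_subset fun j => dyadicLevel_subset hsub j _

lemma monotone_dyadicChain (hsub : ∀ s, halve s ⊆ s) : Monotone (dyadicChain halve B) :=
  fun _ _ hst => iUnion_mono fun j => monotone_dyadicLevel hsub j
    (Nat.floor_le_floor (mul_le_mul_of_nonneg_right hst (by positivity)))

@[simp]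
lemma dyadicChain_zero : dyadicChain halve B 0 = ∅ := by
  simp [dyadicChain]

@[simp]
lemma dyadicChain_one : dyadicChain halve B 1 = B := by
  have h2 : ∀ j : ℕ, ⌊(1 : ℝ) * 2 ^ j⌋₊ = 2 ^ j := fun j => by
    simpa using Nat.floor_natCast (R := ℝ) (2 ^ j)
  simp_rw [dyadicChain, h2, dyadicLevel_two_pow, iUnion_const]

variable [MeasurableSpace α] {μ : Measure α}

lemma measurableSet_dyadicLevel (hm : ∀ s, MeasurableSet (halve s)) (hB : MeasurableSet B)
    (j k : ℕ) : MeasurableSet (dyadicLevel halve B j k) := by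
  induction j generalizing k with
  | zero => unfold dyadicLevel; split_ifs <;> simp [hB]
  | succ j ih =>
    obtain ⟨m, rfl | rfl⟩ := Nat.even_or_odd' k
    · rw [dyadicLevel_succ_two_mul]; exact ih m
    · rw [dyadicLevel_succ_two_mul_add_one]; exact (ih m).union (hm _)

lemma setIntegral_dyadicLevel (hm : ∀ s, MeasurableSet (halve s)) (hsub : ∀ s, halve s ⊆ s)
    (hB : MeasurableSet B) {f : α → ℝ} (hf : Integrable f μ)
    (hhalf : ∀ s, MeasurableSet s → ∫ x in halve s, f x ∂μ = 1 / 2 * ∫ x in s, f x ∂μ)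
    {j k : ℕ} (hk : k ≤ 2 ^ j) :
    ∫ x in dyadicLevel halve B j k, f x ∂μ = k / 2 ^ j * ∫ x in B, f x ∂μ := by
  have hD := measurableSet_dyadicLevel hm hB (B := B)
  induction j generalizing k with
  | zero =>
    interval_cases k <;> simp [dyadicLevel]
  | succ j ih =>
    rw [pow_succ'] at hk
    obtain ⟨m, rfl | rfl⟩ := Nat.even_or_odd' k
    · rw [dyadicLevel_succ_two_mul, ih (by omega)]
      push_cast
      ring
    · have hdisj : Disjoint (dyadicLevel halve B j m)
          (halve (dyadicLevel halve B j (m + 1) \ dyadicLevel halve B j m)) :=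
        disjoint_sdiff_right.mono_right (hsub _)
      rw [dyadicLevel_succ_two_mul_add_one, setIntegral_union hdisj (hm _) hf.integrableOn
          hf.integrableOn, hhalf _ ((hD _ _).diff (hD _ _)),
        setIntegral_sdiff (hD _ _) hf.integrableOn (dyadicLevel_subset_succ hsub j m),
        ih (by omega), ih (by omega)]
      push_cast
      ring

lemma measurableSet_dyadicChain (hm : ∀ s, MeasurableSet (halve s)) (hB : MeasurableSet B)
    (t : ℝ) : MeasurableSet (dyadicChain halve B t) :=
  .iUnion fun j => measurableSet_dyadicLevel hm hB j _

lemma setIntegral_dyadicChain (hm : ∀ s, MeasurableSet (halve s)) (hsub : ∀ s, halve s ⊆ s)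
    (hB : MeasurableSet B) {f : α → ℝ} (hf : Integrable f μ)
    (hhalf : ∀ s, MeasurableSet s → ∫ x in halve s, f x ∂μ = 1 / 2 * ∫ x in s, f x ∂μ)
    {t : ℝ} (ht : t ∈ Icc 0 1) :
    ∫ x in dyadicChain halve B t, f x ∂μ = t * ∫ x in B, f x ∂μ := by
  have hmono : Monotone fun j : ℕ => dyadicLevel halve B j ⌊t * 2 ^ j⌋₊ := by
    refine monotone_nat_of_le_succ fun j => ?_
    rw [← dyadicLevel_succ_two_mul]
    refine monotone_dyadicLevel hsub _ (Nat.le_floor ?_)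
    push_cast
    rw [pow_succ]
    nlinarith [Nat.floor_le (mul_nonneg ht.1 (by positivity : (0:ℝ) ≤ 2 ^ j))]
  have hlevels : Tendsto (fun j : ℕ => (⌊t * 2 ^ j⌋₊ : ℝ) / 2 ^ j * ∫ x in B, f x ∂μ) atTop
      (𝓝 (t * ∫ x in B, f x ∂μ)) :=
    ((tendsto_nat_floor_mul_div_atTop ht.1).comp
      (tendsto_pow_atTop_atTop_of_one_lt one_lt_two)).mul_const _
  refine tendsto_nhds_unique
    (tendsto_setIntegral_of_monotone (fun j => measurableSet_dyadicLevel hm hB j _) hmono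
      hf.integrableOn) (hlevels.congr fun j => ?_)
  refine (setIntegral_dyadicLevel hm hsub hB hf hhalf (Nat.floor_le_of_le ?_)).symm
  push_cast
  nlinarith [ht.2, pow_pos (two_pos : (0:ℝ) < 2) j]

lemma setIntegral_dyadicChain_sdiff (hm : ∀ s, MeasurableSet (halve s))
    (hsub : ∀ s, halve s ⊆ s) (hB : MeasurableSet B) {f : α → ℝ} (hf : Integrable f μ)
    (hhalf : ∀ s, MeasurableSet s → ∫ x in halve s, f x ∂μ = 1 / 2 * ∫ x in s, f x ∂μ)
    {a b : ℝ} (ha : 0 ≤ a) (hab : a ≤ b) (hb : b ≤ 1) :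
    ∫ x in dyadicChain halve B b \ dyadicChain halve B a, f x ∂μ =
      (b - a) * ∫ x in B, f x ∂μ := by
  rw [setIntegral_sdiff (measurableSet_dyadicChain hm hB a) hf.integrableOn
    (monotone_dyadicChain hsub hab), setIntegral_dyadicChain hm hsub hB hf hhalf ⟨ha.trans hab, hb⟩,
    setIntegral_dyadicChain hm hsub hB hf hhalf ⟨ha, hab.trans hb⟩]
  ring

lemma measureReal_dyadicChain_sdiff [IsFiniteMeasure μ] (hm : ∀ s, MeasurableSet (halve s))
    (hsub : ∀ s, halve s ⊆ s) (hB : MeasurableSet B)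
    (hμ : ∀ s, MeasurableSet s → μ (halve s) = μ s / 2) {a b : ℝ} (ha : a ∈ Icc 0 1)
    (hb : b ∈ Icc 0 1) :
    μ.real (dyadicChain halve B b \ dyadicChain halve B a) = max (b - a) 0 * μ.real B := by
  rcases le_total a b with hab | hba
  · rw [max_eq_left (sub_nonneg.2 hab), ← setIntegral_one_eq_measureReal,
      ← setIntegral_one_eq_measureReal,
      setIntegral_dyadicChain_sdiff hm hsub hB (integrable_const 1)
        (fun s hs => setIntegral_one_eq_half (hμ s hs)) ha.1 hab hb.2]
  · rw [max_eq_right (sub_nonpos.2 hba), sdiff_eq_empty.2 (monotone_dyadicChain hsub hba)]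
    simp

lemma continuousOn_setIntegral_dyadicChain [IsFiniteMeasure μ] (hm : ∀ s, MeasurableSet (halve s))
    (hsub : ∀ s, halve s ⊆ s) (hB : MeasurableSet B)
    (hμ : ∀ s, MeasurableSet s → μ (halve s) = μ s / 2) {f : α → ℝ} (hf : Integrable f μ) :
    ContinuousOn (fun t => ∫ x in dyadicChain halve B t, f x ∂μ) (Icc 0 1) := by
  intro a ha
  have hlim : ∀ g : ℝ → ℝ, Continuous g → g a = 0 →
      Tendsto (fun x => ENNReal.ofReal (g x)) (𝓝[Icc 0 1] a) (𝓝 0) := fun g hg hga => by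
    simpa [hga, Function.comp_def] using
      ((ENNReal.continuous_ofReal.comp hg).tendsto a).mono_left nhdsWithin_le_nhds
  refine continuousWithinAt_setIntegral hf (measurableSet_dyadicChain hm hB) ?_ ?_
  · refine (hlim (fun x => max (x - a) 0 * μ.real B) (by fun_prop) (by simp)).congr' ?_
    filter_upwards [self_mem_nhdsWithin] with x hx
    rw [← measureReal_dyadicChain_sdiff hm hsub hB hμ ha hx, ofReal_measureReal]
  · refine (hlim (fun x => max (a - x) 0 * μ.real B) (by fun_prop) (by simp)).congr' ?_
    filter_upwards [self_mem_nhdsWithin] with x hx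
    rw [← measureReal_dyadicChain_sdiff hm hsub hB hμ hx ha, ofReal_measureReal]

end Dyadic

section Step

variable {α : Type*} [MeasurableSpace α] {μ : Measure α} [IsFiniteMeasure μ]

lemma isBisection_dyadicChain_sdiff {ι : Type*} {K : ι → α → ℝ} (hK : ∀ i, Integrable (K i) μ)
    {halve : Set α → Set α} (hm : ∀ s, MeasurableSet (halve s)) (hsub : ∀ s, halve s ⊆ s)
    (hhalve : ∀ s, MeasurableSet s → IsBisection μ K s (halve s)) {B : Set α}
    (hB : MeasurableSet B) {t : ℝ} (ht : t ∈ Icc 0 (1 / 2)) :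
    IsBisection μ K B (dyadicChain halve B (t + 1 / 2) \ dyadicChain halve B t) where
  measurableSet := (measurableSet_dyadicChain hm hB _).diff (measurableSet_dyadicChain hm hB _)
  subset := sdiff_subset.trans (dyadicChain_subset hsub _)
  measure_eq := by
    rw [measure_eq_div_two_iff, measureReal_dyadicChain_sdiff hm hsub hB
      (fun s hs => (hhalve s hs).measure_eq) ⟨ht.1, by linarith [ht.2]⟩
      ⟨by linarith [ht.1], by linarith [ht.2]⟩, add_sub_cancel_left,
      max_eq_left (by norm_num)]
    ring
  setIntegral_eq i := by
    rw [setIntegral_dyadicChain_sdiff hm hsub hB (hK i) (fun s hs => (hhalve s hs).setIntegral_eq i)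
      ht.1 (by linarith) (by linarith [ht.2]), add_sub_cancel_left]

theorem exists_isBisection_and_setIntegral_eq {ι : Type*} {K : ι → α → ℝ}
    (hK : ∀ i, Integrable (K i) μ) (hbis : ∀ s, MeasurableSet s → ∃ A, IsBisection μ K s A)
    {h : α → ℝ} (hh : Integrable h μ) {B : Set α} (hB : MeasurableSet B) :
    ∃ A, IsBisection μ K B A ∧ ∫ x in A, h x ∂μ = 1 / 2 * ∫ x in B, h x ∂μ := by
  obtain ⟨halve, hm, hsub, hhalve⟩ : ∃ halve : Set α → Set α, (∀ s, MeasurableSet (halve s)) ∧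
      (∀ s, halve s ⊆ s) ∧ ∀ s, MeasurableSet s → IsBisection μ K s (halve s) := by
    have : ∀ s, ∃ A, MeasurableSet A ∧ A ⊆ s ∧ (MeasurableSet s → IsBisection μ K s A) := by
      intro s
      by_cases hs : MeasurableSet s
      · obtain ⟨A, hA⟩ := hbis s hs
        exact ⟨A, hA.measurableSet, hA.subset, fun _ => hA⟩
      · exact ⟨∅, .empty, empty_subset s, fun h => absurd h hs⟩
    choose halve hm hsub hhalve using this
    exact ⟨halve, hm, hsub, hhalve⟩
  set C := dyadicChain halve B
  set F : ℝ → ℝ := fun t => ∫ x in C t, h x ∂μ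
  have hF : ContinuousOn F (Icc 0 1) := continuousOn_setIntegral_dyadicChain hm hsub hB
    (fun s hs => (hhalve s hs).measure_eq) hh
  have hwindow : ∀ t ∈ Icc (0 : ℝ) (1 / 2),
      ∫ x in C (t + 1 / 2) \ C t, h x ∂μ = F (t + 1 / 2) - F t :=
    fun t ht => setIntegral_sdiff (measurableSet_dyadicChain hm hB t) hh.integrableOn
      (monotone_dyadicChain hsub (by linarith))
  have hφ : ContinuousOn (fun t => F (t + 1 / 2) - F t) (uIcc 0 (1 / 2)) := by
    rw [uIcc_of_le (by norm_num)]
    exact (hF.comp (by fun_prop) fun t ht => ⟨by linarith [ht.1], by linarith [ht.2]⟩).sub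
      (hF.mono (Icc_subset_Icc le_rfl (by norm_num)))
  have hmid : 1 / 2 * ∫ x in B, h x ∂μ ∈
      uIcc (F (0 + 1 / 2) - F 0) (F (1 / 2 + 1 / 2) - F (1 / 2)) := by
    have h0 : F 0 = 0 := by simp [F, C]
    have h1 : F (1 / 2 + 1 / 2) = ∫ x in B, h x ∂μ := by norm_num [F, C]
    rw [h0, h1, zero_add, sub_zero, mem_uIcc]
    rcases le_total (F (1 / 2)) ((∫ x in B, h x ∂μ) - F (1 / 2)) with hle | hle
    · left; constructor <;> linarith
    · right; constructor <;> linarith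
  obtain ⟨t, ht, hFt⟩ := intermediate_value_uIcc hφ hmid
  rw [uIcc_of_le (by norm_num)] at ht
  exact ⟨_, isBisection_dyadicChain_sdiff hK hm hsub hhalve hB ht, (hwindow t ht).trans hFt⟩

theorem exists_isBisection_of_forall_exists_subset_measure_eq_half
    (hμ : ∀ s, MeasurableSet s → ∃ A, MeasurableSet A ∧ A ⊆ s ∧ μ A = μ s / 2) {n : ℕ}
    (g : Fin n → α → ℝ) (hg : ∀ i, Integrable (g i) μ) {B : Set α} (hB : MeasurableSet B) :
    ∃ A, IsBisection μ g B A := by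
  induction n generalizing B with
  | zero =>
    obtain ⟨A, hA, hAB, hAμ⟩ := hμ B hB
    exact ⟨A, hA, hAB, hAμ, fun i => i.elim0⟩
  | succ n ih =>
    obtain ⟨A, hA, hlast⟩ := exists_isBisection_and_setIntegral_eq (K := Fin.init g)
      (fun i => hg _) (fun s hs => ih (Fin.init g) (fun i => hg _) hs) (hg (Fin.last n)) hB
    exact ⟨A, hA.measurableSet, hA.subset, hA.measure_eq, Fin.lastCases hlast hA.setIntegral_eq⟩

end Step

theorem stmt13_general (B : Set ℝ) (hB : MeasurableSet B)
    (n : ℕ) (g : Fin n → ℝ → ℝ) (hg : ∀ i, Integrable (g i) μ01) :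
    ∃ B₁ : Set ℝ, MeasurableSet B₁ ∧ B₁ ⊆ B ∧ μ01 B₁ = μ01 B / 2 ∧
      ∀ i, ∫ x in B₁, g i x ∂μ01 = (1 / 2) * ∫ x in B, g i x ∂μ01 := by
  obtain ⟨A, hA⟩ := exists_isBisection_of_forall_exists_subset_measure_eq_half
    (fun s hs => exists_subset_measure_eq_half μ01 hs) g hg hB
  exact ⟨A, hA.measurableSet, hA.subset, hA.measure_eq, hA.setIntegral_eq⟩

/-- For any measurable `B ⊆ [0,1]` and `g 1, …, g n ∈ L¹[0,1]` there is a measurable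
`B₁ ⊆ B` with `μ B₁ = μ B / 2` and `∫_{B₁} gᵢ = (1/2) ∫_B gᵢ` for every `i`. -/
theorem stmt13 (B : Set ℝ) (hB : MeasurableSet B) (hB1 : B ⊆ Set.Icc 0 1)
    (n : ℕ) (g : Fin n → ℝ → ℝ) (hg : ∀ i, Integrable (g i) μ01) :
    ∃ B₁ : Set ℝ, MeasurableSet B₁ ∧ B₁ ⊆ B ∧ μ01 B₁ = μ01 B / 2 ∧
      ∀ i, ∫ x in B₁, g i x ∂μ01 = (1 / 2) * ∫ x in B, g i x ∂μ01 :=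
  stmt13_general B hB n g hg
end
end
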